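/- arXiv:2104.06570 — 13 statements merged into one kernel-verified Lean document; each statement's English description precedes it below -/
import Mathlib

section
/- Let (E, ρ) be a q-polymatroid over a finite field 𝔽_q and let ⟨·,·⟩ be a nondegenerate symmetric bilinear form on E. Define ρ*(V) = dim V + ρ(V^⊥) − ρ(E) for every subspace V of E. Then ρ* is a q-rank function on E (so (E, ρ*) is a q-polymatroid), and the bidual equals the original: (ρ*)*(V) = ρ(V) for all subspaces V of E. -/
open Module

/-!
The map `V ↦ V^⊥` is an inclusion-reversing involution exchanging `⊔` and `⊓` and sending
`dim V` to `dim E - dim V`. Hence submodularity of `ρ*` is submodularity of `ρ` read through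
`V ↦ V^⊥`, and monotonicity and nonnegativity of `ρ*` both reduce to the bound
`ρ Y - ρ X ≤ dim Y - dim X` for `X ≤ Y`, which follows from submodularity applied to `X` and a
complement of `X` in `Y`. Since `E^⊥ = 0` and `ρ 0 = 0`, the bidual unfolds to `ρ`.
-/

structure IsRankFunction {K E : Type*} [DivisionRing K] [AddCommGroup E] [Module K E]
    (ρ : Submodule K E → ℚ) : Prop where
  nonneg : ∀ V, 0 ≤ ρ V
  le_finrank : ∀ V, ρ V ≤ finrank K V
  mono : Monotone ρ
  submodular : ∀ V W, ρ (V ⊔ W) + ρ (V ⊓ W) ≤ ρ V + ρ W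

namespace IsRankFunction

variable {K E : Type*} [DivisionRing K] [AddCommGroup E] [Module K E] {ρ : Submodule K E → ℚ}

theorem map_bot (hρ : IsRankFunction ρ) : ρ ⊥ = 0 :=
  le_antisymm (by simpa using hρ.le_finrank ⊥) (hρ.nonneg ⊥)

theorem sub_le_finrank_sub [FiniteDimensional K E] (hρ : IsRankFunction ρ)
    {X Y : Submodule K E} (hXY : X ≤ Y) :
    ρ Y - ρ X ≤ (finrank K Y : ℚ) - finrank K X := by
  obtain ⟨C, hC⟩ := X.exists_isCompl
  have hsup : X ⊔ C ⊓ Y = Y := by rw [← sup_inf_assoc_of_le C hXY, hC.sup_eq_top, top_inf_eq]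
  have hinf : X ⊓ (C ⊓ Y) = ⊥ := by rw [← inf_assoc, hC.inf_eq_bot, bot_inf_eq]
  have hdim := Submodule.finrank_sup_add_finrank_inf_eq X (C ⊓ Y)
  rw [hsup, hinf, finrank_bot] at hdim
  have hsub := hρ.submodular X (C ⊓ Y)
  rw [hsup, hinf, hρ.map_bot] at hsub
  have hCY_le := hρ.le_finrank (C ⊓ Y)
  have hdimℚ : (finrank K Y : ℚ) = finrank K X + finrank K ↥(C ⊓ Y) := by
    exact_mod_cast hdim
  linarith

end IsRankFunction

namespace LinearMap.BilinForm

variable {K E : Type*} [Field K] [AddCommGroup E] [Module K E] {B : LinearMap.BilinForm K E}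

theorem orthogonal_sup (V W : Submodule K E) :
    B.orthogonal (V ⊔ W) = B.orthogonal V ⊓ B.orthogonal W := by
  refine le_antisymm (le_inf (orthogonal_le le_sup_left) (orthogonal_le le_sup_right)) ?_
  rintro x ⟨hxV, hxW⟩ _ hn
  obtain ⟨v, hv, w, hw, rfl⟩ := Submodule.mem_sup.mp hn
  rw [map_add, LinearMap.add_apply, hxV v hv, hxW w hw, add_zero]

variable [FiniteDimensional K E]

theorem orthogonal_inf (hB : B.Nondegenerate) (hB₀ : B.IsRefl) (V W : Submodule K E) :
    B.orthogonal (V ⊓ W) = B.orthogonal V ⊔ B.orthogonal W := by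
  conv_lhs => rw [← orthogonal_orthogonal hB hB₀ V, ← orthogonal_orthogonal hB hB₀ W,
    ← orthogonal_sup, orthogonal_orthogonal hB hB₀]

theorem finrank_add_finrank_orthogonal_eq (hB : B.Nondegenerate) (W : Submodule K E) :
    (finrank K W : ℚ) + finrank K (B.orthogonal W) = finrank K E := by
  rw [finrank_orthogonal hB, Nat.cast_sub W.finrank_le]
  ring

noncomputable def dualRank (B : LinearMap.BilinForm K E) (ρ : Submodule K E → ℚ)
    (V : Submodule K E) : ℚ :=
  finrank K V + ρ (B.orthogonal V) - ρ ⊤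

theorem isRankFunction_dualRank (hB : B.Nondegenerate) (hB₀ : B.IsRefl)
    {ρ : Submodule K E → ℚ} (hρ : IsRankFunction ρ) : IsRankFunction (B.dualRank ρ) := by
  have hdim := finrank_add_finrank_orthogonal_eq hB
  refine ⟨fun V => ?_, fun V => ?_, fun V W hVW => ?_, fun V W => ?_⟩ <;> simp only [dualRank]
  · have := hρ.sub_le_finrank_sub (le_top : B.orthogonal V ≤ ⊤)
    rw [finrank_top] at this
    linarith [hdim V]
  · linarith [hρ.mono (le_top : B.orthogonal V ≤ ⊤)]
  · linarith [hρ.sub_le_finrank_sub (orthogonal_le (B := B) hVW), hdim V, hdim W]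
  · rw [orthogonal_sup, orthogonal_inf hB hB₀]
    have hdim_sup_inf : (finrank K ↥(V ⊔ W) : ℚ) + finrank K ↥(V ⊓ W) =
        finrank K V + finrank K W := by
      exact_mod_cast Submodule.finrank_sup_add_finrank_inf_eq V W
    linarith [hρ.submodular (B.orthogonal V) (B.orthogonal W)]

theorem dualRank_dualRank (hB : B.Nondegenerate) (hB₀ : B.IsRefl) {ρ : Submodule K E → ℚ}
    (hρ : ρ ⊥ = 0) : B.dualRank (B.dualRank ρ) = ρ := by
  ext V
  simp only [dualRank, orthogonal_orthogonal hB hB₀, orthogonal_top_eq_bot hB, hρ,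
    finrank_top]
  linarith [finrank_add_finrank_orthogonal_eq hB V]

end LinearMap.BilinForm

theorem dual_rank_function_is_rank_function_and_bidual_general
    {F E : Type} [Field F] [AddCommGroup E] [Module F E]
    [FiniteDimensional F E]
    (B : E →ₗ[F] E →ₗ[F] F)
    (hsymm : ∀ x y : E, B x y = B y x)
    (hnondeg : ∀ x : E, (∀ y : E, B x y = 0) → x = 0)
    (ρ : Submodule F E → ℚ)
    (hnonneg : ∀ V : Submodule F E, 0 ≤ ρ V)
    (hR1 : ∀ V : Submodule F E, ρ V ≤ finrank F V)
    (hR2 : ∀ V W : Submodule F E, V ≤ W → ρ V ≤ ρ W)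
    (hR3 : ∀ V W : Submodule F E, ρ (V ⊔ W) + ρ (V ⊓ W) ≤ ρ V + ρ W)
    (ρd : Submodule F E → ℚ)
    (hρd : ∀ V : Submodule F E,
      ρd V = (finrank F V : ℚ) + ρ (LinearMap.BilinForm.orthogonal B V) - ρ ⊤) :
    (∀ V : Submodule F E, 0 ≤ ρd V) ∧
    (∀ V : Submodule F E, ρd V ≤ finrank F V) ∧
    (∀ V W : Submodule F E, V ≤ W → ρd V ≤ ρd W) ∧
    (∀ V W : Submodule F E, ρd (V ⊔ W) + ρd (V ⊓ W) ≤ ρd V + ρd W) ∧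
    (∀ V : Submodule F E,
      (finrank F V : ℚ) + ρd (LinearMap.BilinForm.orthogonal B V) - ρd ⊤ = ρ V) := by
  have hB₀ : B.IsRefl := fun x y h => (hsymm y x).trans h
  have hB : LinearMap.BilinForm.Nondegenerate B :=
    ⟨hnondeg, fun y hy => hnondeg y fun x => (hsymm y x).trans (hy x)⟩
  have hρ : IsRankFunction ρ := ⟨hnonneg, hR1, fun V W => hR2 V W, hR3⟩
  obtain rfl : ρd = LinearMap.BilinForm.dualRank B ρ := funext hρd
  have hρ' := LinearMap.BilinForm.isRankFunction_dualRank hB hB₀ hρ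
  exact ⟨hρ'.nonneg, hρ'.le_finrank, fun _ _ hVW => hρ'.mono hVW, hρ'.submodular,
    congrFun (LinearMap.BilinForm.dualRank_dualRank hB hB₀ hρ.map_bot)⟩

/-- Let `(E, ρ)` be a `q`-polymatroid over a finite field and `B` a
nondegenerate symmetric bilinear form on `E`. Define `ρ*(V) = dim V + ρ(V^⊥) − ρ(E)`.
Then `ρ*` is a `q`-rank function on `E` and `(ρ*)* = ρ`. -/
theorem dual_rank_function_is_rank_function_and_bidual
    {F E : Type} [Field F] [Fintype F] [AddCommGroup E] [Module F E]
    [FiniteDimensional F E]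
    (B : E →ₗ[F] E →ₗ[F] F)
    (hsymm : ∀ x y : E, B x y = B y x)
    (hnondeg : ∀ x : E, (∀ y : E, B x y = 0) → x = 0)
    (ρ : Submodule F E → ℚ)
    (hnonneg : ∀ V : Submodule F E, 0 ≤ ρ V)
    (hR1 : ∀ V : Submodule F E, ρ V ≤ finrank F V)
    (hR2 : ∀ V W : Submodule F E, V ≤ W → ρ V ≤ ρ W)
    (hR3 : ∀ V W : Submodule F E, ρ (V ⊔ W) + ρ (V ⊓ W) ≤ ρ V + ρ W)
    (ρd : Submodule F E → ℚ)
    (hρd : ∀ V : Submodule F E,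
      ρd V = (finrank F V : ℚ) + ρ (LinearMap.BilinForm.orthogonal B V) - ρ ⊤) :
    (∀ V : Submodule F E, 0 ≤ ρd V) ∧
    (∀ V : Submodule F E, ρd V ≤ finrank F V) ∧
    (∀ V W : Submodule F E, V ≤ W → ρd V ≤ ρd W) ∧
    (∀ V W : Submodule F E, ρd (V ⊔ W) + ρd (V ⊓ W) ≤ ρd V + ρd W) ∧
    (∀ V : Submodule F E,
      (finrank F V : ℚ) + ρd (LinearMap.BilinForm.orthogonal B V) - ρd ⊤ = ρ V) :=
  dual_rank_function_is_rank_function_and_bidual_general B hsymm hnondeg ρ hnonneg hR1 hR2 hR3 ρd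
    hρd
end

section
/- Let (E, ρ) be a q-polymatroid over a finite field 𝔽_q and let ⟨·,·⟩ and ⟨⟨·,·⟩⟩ be two nondegenerate symmetric bilinear forms on E, with dual rank functions ρ*(V) = dim V + ρ(V^⊥) − ρ(E) and ρ^̂*(V) = dim V + ρ(V^⊥̂) − ρ(E), where ⊥ and ⊥̂ denote the respective orthogonal operations. Then the two dual q-polymatroids are equivalent: there exists an 𝔽_q-linear automorphism φ of E such that ρ*(φ(V)) = ρ^̂*(V) for all subspaces V of E. -/
/-!
A left-nondegenerate form `B` identifies `E` with its dual, so every other such form `B'` is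
`B' x = B (φ x)` for a linear automorphism `φ`. This `φ` carries `B'`-orthogonals to
`B`-orthogonals and preserves dimensions, hence transports one dual rank function to the other.
-/

open Module

namespace LinearMap.BilinForm

variable {K V : Type*} [Field K] [AddCommGroup V] [Module K V]

theorem bijective_of_separatingLeft [FiniteDimensional K V] {B : LinearMap.BilinForm K V}
    (hB : B.SeparatingLeft) : Function.Bijective B := by
  have hinj : Function.Injective B :=
    LinearMap.ker_eq_bot.mp (separatingLeft_iff_ker_eq_bot.mp hB)
  exact ⟨hinj, (injective_iff_surjective_of_finrank_eq_finrank
    Subspace.dual_finrank_eq.symm).mp hinj⟩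

theorem exists_linearEquiv_apply_eq [FiniteDimensional K V] {B B' : LinearMap.BilinForm K V}
    (hB : B.SeparatingLeft) (hB' : B'.SeparatingLeft) :
    ∃ φ : V ≃ₗ[K] V, ∀ x y, B (φ x) y = B' x y := by
  let e := LinearEquiv.ofBijective B (bijective_of_separatingLeft hB)
  let e' := LinearEquiv.ofBijective B' (bijective_of_separatingLeft hB')
  exact ⟨e'.trans e.symm, fun x => LinearMap.congr_fun (e.apply_symm_apply (e' x))⟩

theorem orthogonal_map_eq {B B' : LinearMap.BilinForm K V} {φ : V ≃ₗ[K] V}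
    (hφ : ∀ x y, B (φ x) y = B' x y) (W : Submodule K V) :
    B.orthogonal (W.map (φ : V →ₗ[K] V)) = B'.orthogonal W := by
  ext y
  simp only [mem_orthogonal_iff, Submodule.mem_map, forall_exists_index, and_imp,
    forall_apply_eq_imp_iff₂, LinearEquiv.coe_coe, hφ]

end LinearMap.BilinForm

theorem dual_qPolymatroids_equivalent_for_two_forms_general
    {F E : Type} [Field F] [AddCommGroup E] [Module F E]
    [FiniteDimensional F E]
    (B B' : E →ₗ[F] E →ₗ[F] F)
    (hnondeg : ∀ x : E, (∀ y : E, B x y = 0) → x = 0)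
    (hnondeg' : ∀ x : E, (∀ y : E, B' x y = 0) → x = 0)
    (ρ : Submodule F E → ℚ)
    (ρd ρd' : Submodule F E → ℚ)
    (hρd : ∀ V : Submodule F E,
      ρd V = (finrank F V : ℚ) + ρ (LinearMap.BilinForm.orthogonal B V) - ρ ⊤)
    (hρd' : ∀ V : Submodule F E,
      ρd' V = (finrank F V : ℚ) + ρ (LinearMap.BilinForm.orthogonal B' V) - ρ ⊤) :
    ∃ φ : E ≃ₗ[F] E, ∀ V : Submodule F E,
      ρd (Submodule.map (φ : E →ₗ[F] E) V) = ρd' V := by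
  obtain ⟨φ, hφ⟩ := LinearMap.BilinForm.exists_linearEquiv_apply_eq hnondeg hnondeg'
  refine ⟨φ, fun V => ?_⟩
  rw [hρd, hρd', LinearMap.BilinForm.orthogonal_map_eq hφ, LinearEquiv.finrank_map_eq]

/-- Two nondegenerate symmetric bilinear forms on `E` yield equivalent
dual `q`-polymatroids: there is a linear automorphism `φ` of `E` with
`ρ*(φ(V)) = ρ^̂*(V)` for all subspaces `V`. -/
theorem dual_qPolymatroids_equivalent_for_two_forms
    {F E : Type} [Field F] [Fintype F] [AddCommGroup E] [Module F E]
    [FiniteDimensional F E]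
    (B B' : E →ₗ[F] E →ₗ[F] F)
    (hsymm : ∀ x y : E, B x y = B y x)
    (hnondeg : ∀ x : E, (∀ y : E, B x y = 0) → x = 0)
    (hsymm' : ∀ x y : E, B' x y = B' y x)
    (hnondeg' : ∀ x : E, (∀ y : E, B' x y = 0) → x = 0)
    (ρ : Submodule F E → ℚ)
    (hnonneg : ∀ V : Submodule F E, 0 ≤ ρ V)
    (hR1 : ∀ V : Submodule F E, ρ V ≤ finrank F V)
    (hR2 : ∀ V W : Submodule F E, V ≤ W → ρ V ≤ ρ W)
    (hR3 : ∀ V W : Submodule F E, ρ (V ⊔ W) + ρ (V ⊓ W) ≤ ρ V + ρ W)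
    (ρd ρd' : Submodule F E → ℚ)
    (hρd : ∀ V : Submodule F E,
      ρd V = (finrank F V : ℚ) + ρ (LinearMap.BilinForm.orthogonal B V) - ρ ⊤)
    (hρd' : ∀ V : Submodule F E,
      ρd' V = (finrank F V : ℚ) + ρ (LinearMap.BilinForm.orthogonal B' V) - ρ ⊤) :
    ∃ φ : E ≃ₗ[F] E, ∀ V : Submodule F E,
      ρd (Submodule.map (φ : E →ₗ[F] E) V) = ρd' V :=
  dual_qPolymatroids_equivalent_for_two_forms_general B B' hnondeg hnondeg' ρ ρd ρd' hρd hρd'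
end

section
/- Let C be a nonzero rank-metric code in 𝔽_q^{n×m} with rank distance d = d_rk(C), and let V be a subspace of 𝔽_q^n of dimension v with v ≥ d − 1. Then dim C(V,c) ≤ max{m, v}·(min{m, v} − d + 1). -/
open Module

/-- The submodule of `n × m` matrices whose column space is contained in `V`. -/
def colspLE {F : Type} [Field F] {n m : ℕ} (V : Submodule F (Fin n → F)) :
    Submodule F (Matrix (Fin n) (Fin m) F) where
  carrier := {M | ∀ x : Fin m → F, M.mulVec x ∈ V}
  add_mem' := by
    intro M N hM hN x
    rw [Set.mem_setOf_eq] at *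
    rw [Matrix.add_mulVec]
    exact V.add_mem (hM x) (hN x)
  zero_mem' := by
    intro x
    simp only [Set.mem_setOf_eq, Matrix.zero_mulVec]
    exact V.zero_mem
  smul_mem' := by
    intro c M hM x
    rw [Set.mem_setOf_eq] at *
    rw [Matrix.smul_mulVec]
    exact V.smul_mem c (hM x)

/-- The shortening `C(V, c) = {M ∈ C : colsp(M) ⊆ V}`. -/
def codeC {F : Type} [Field F] {n m : ℕ} (C : Submodule F (Matrix (Fin n) (Fin m) F))
    (V : Submodule F (Fin n → F)) : Submodule F (Matrix (Fin n) (Fin m) F) :=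
  C ⊓ colspLE V

/-!
Choosing a basis of `V` writes every `M ∈ C(V,c)` as `A * N` with `A` an `n × v` matrix whose
columns are linearly independent, so `rk N = rk M` and `M ↦ N` embeds `C(V,c)` into a code in
`𝔽^{v×m}` with minimum rank at least `d`. That code obeys the Singleton-like bound: deleting
`d - 1` rows or columns on the smaller side is injective on it, since a nonzero matrix supported
on `d - 1` rows has rank below `d`.
-/

open Matrix

namespace Matrix

variable {ι κ o R F : Type*}

theorem rank_pos_of_ne_zero [Field F] [Fintype κ] {M : Matrix ι κ F} (hM : M ≠ 0) :
    0 < M.rank := by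
  refine Submodule.one_le_finrank_iff.mpr fun h => hM (ext_iff_mulVec.mpr fun x => ?_)
  simpa using LinearMap.congr_fun (LinearMap.range_eq_bot.mp h) x

theorem mul_right_injective_of_mulVec_injective [CommSemiring R] [Fintype κ] [Fintype o]
    {A : Matrix ι κ R} (hA : Function.Injective A.mulVec) :
    Function.Injective fun N : Matrix κ o R => A * N :=
  fun N N' h => ext_iff_mulVec.mpr fun x => hA <| by simp only [mulVec_mulVec, h]

theorem exists_mul_eq_of_mulVec_mem_range [CommSemiring R] [Fintype κ] [Fintype o]
    [DecidableEq o] {A : Matrix ι κ R} {M : Matrix ι o R}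
    (hM : ∀ x, M *ᵥ x ∈ LinearMap.range A.mulVecLin) : ∃ N : Matrix κ o R, A * N = M := by
  choose x hx using fun j => hM (Pi.single j 1)
  refine ⟨(Matrix.of x)ᵀ, ext_of_mulVec_single fun j => ?_⟩
  rw [← mulVec_mulVec, mulVec_single_one, ← hx j]
  rfl

theorem exists_range_mulVecLin_eq [Field F] [Fintype ι] (V : Submodule F (ι → F)) :
    ∃ A : Matrix ι (Fin (Module.finrank F V)) F,
      LinearMap.range A.mulVecLin = V ∧ Function.Injective A.mulVec := by
  let B := Module.finBasis F V
  refine ⟨of fun i k => (B k : ι → F) i, ?_, ?_⟩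
  · rw [range_mulVecLin]
    change Submodule.span F (Set.range (V.subtype ∘ B)) = V
    rw [Set.range_comp, Submodule.span_image, B.span_eq, Submodule.map_subtype_top]
  · exact mulVec_injective_iff.mpr (B.linearIndependent.map' V.subtype V.ker_subtype)

section

variable [Field F] [Fintype ι] [Fintype κ]

theorem finrank_le_card_width_mul_of_lt_rank {k : ℕ} (W : Submodule F (Matrix ι κ F))
    (hW : ∀ M ∈ W, M ≠ 0 → k < M.rank) :
    finrank F W ≤ Fintype.card κ * (Fintype.card ι - k) := by
  classical
  obtain ⟨s, -, hs⟩ := Finset.exists_subset_card_eq (s := (Finset.univ : Finset ι))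
    (n := min k (Fintype.card ι)) (by simp)
  let π : Matrix ι κ F →ₗ[F] Matrix (↥sᶜ) κ F := LinearMap.funLeft F (κ → F) Subtype.val
  -- A matrix killed by deleting the rows in `s` has rank at most `#s ≤ k`.
  have hπ : Function.Injective (π ∘ₗ W.subtype) := by
    rw [← LinearMap.ker_eq_bot, LinearMap.ker_eq_bot']
    intro M hM
    by_contra hne
    have hsupp : Function.support (M : Matrix ι κ F).row ⊆ s := fun i hi =>
      by_contra fun his => hi (congrFun hM ⟨i, by simpa using his⟩)
    have := (hW M M.2 (by simpa using hne)).trans_le (rank_le_card_of_support_subset _ s hsupp)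
    omega
  calc finrank F W ≤ finrank F (Matrix (↥sᶜ) κ F) := LinearMap.finrank_le_finrank_of_injective hπ
    _ = Fintype.card κ * (Fintype.card ι - k) := by
      rw [Module.finrank_matrix, Module.finrank_self, mul_one, Fintype.card_coe,
        Finset.card_compl, hs, mul_comm]
      congr 1
      omega

theorem finrank_le_card_height_mul_of_lt_rank {k : ℕ} (W : Submodule F (Matrix ι κ F))
    (hW : ∀ M ∈ W, M ≠ 0 → k < M.rank) :
    finrank F W ≤ Fintype.card ι * (Fintype.card κ - k) := by
  let e := transposeLinearEquiv ι κ F F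
  rw [← e.finrank_map_eq W]
  refine finrank_le_card_width_mul_of_lt_rank _ ?_
  rintro _ ⟨M, hM, rfl⟩ hne
  change k < Mᵀ.rank
  rw [rank_transpose]
  exact hW M hM (by rintro rfl; exact hne (map_zero e))

theorem finrank_le_max_mul_of_lt_rank {k : ℕ} (W : Submodule F (Matrix ι κ F))
    (hW : ∀ M ∈ W, M ≠ 0 → k < M.rank) :
    finrank F W ≤ max (Fintype.card ι) (Fintype.card κ) *
      (min (Fintype.card ι) (Fintype.card κ) - k) := by
  rcases le_total (Fintype.card ι) (Fintype.card κ) with h | h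
  · rw [max_eq_right h, min_eq_left h]
    exact finrank_le_card_width_mul_of_lt_rank W hW
  · rw [max_eq_left h, min_eq_right h]
    exact finrank_le_card_height_mul_of_lt_rank W hW

end

end Matrix

theorem finrank_le_max_mul_of_le_colspLE {F : Type} [Field F] {n m k : ℕ}
    {V : Submodule F (Fin n → F)} {W : Submodule F (Matrix (Fin n) (Fin m) F)}
    (hWV : W ≤ colspLE V) (hW : ∀ M ∈ W, M ≠ 0 → k < M.rank) :
    finrank F W ≤ max (finrank F V) m * (min (finrank F V) m - k) := by
  obtain ⟨A, hAV, hA⟩ := exists_range_mulVecLin_eq V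
  let ψ := mulLeftLinearMap (Fin m) F A
  have hWψ : W ≤ LinearMap.range ψ := fun M hM =>
    exists_mul_eq_of_mulVec_mem_range fun x => hAV.symm ▸ hWV hM x
  have hrank : ∀ N ∈ W.comap ψ, N ≠ 0 → k < N.rank := fun N hN hne =>
    have hAN : A * N ≠ 0 := fun h =>
      hne (mul_right_injective_of_mulVec_injective hA (h.trans (Matrix.mul_zero A).symm))
    (hW _ hN hAN).trans_le (rank_mul_le_right A N)
  calc finrank F W = finrank F ((W.comap ψ).map ψ) := by rw [Submodule.map_comap_eq_of_le hWψ]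
    _ ≤ finrank F (W.comap ψ) := Submodule.finrank_map_le _ _
    _ ≤ _ := by simpa using finrank_le_max_mul_of_lt_rank _ hrank

theorem finrank_codeC_le_general
    {F : Type} [Field F] {n m : ℕ}
    (C : Submodule F (Matrix (Fin n) (Fin m) F))
    (d : ℕ)
    (hd : IsLeast {r : ℕ | ∃ M ∈ C, M ≠ 0 ∧ M.rank = r} d)
    (V : Submodule F (Fin n → F)) (v : ℕ)
    (hv : finrank F V = v) (hvd : d - 1 ≤ v) :
    (finrank F (codeC C V) : ℤ) ≤ (max m v : ℤ) * ((min m v : ℤ) - d + 1) := by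
  obtain ⟨⟨M₀, -, hM₀, hM₀d⟩, hmin⟩ := hd
  have hpos : 0 < d := hM₀d ▸ rank_pos_of_ne_zero hM₀
  have hwidth : d ≤ m := hM₀d ▸ rank_le_width M₀
  have hbound := finrank_le_max_mul_of_le_colspLE (k := d - 1) (W := codeC C V)
    inf_le_right fun M hM hne => Nat.sub_one_lt_of_le hpos (hmin ⟨M, hM.1, hne, rfl⟩)
  rw [hv, max_comm, min_comm] at hbound
  have hsub : ((min m v - (d - 1) : ℕ) : ℤ) = min (m : ℤ) v - d + 1 := by omega
  calc (finrank F (codeC C V) : ℤ) ≤ ((max m v * (min m v - (d - 1)) : ℕ) : ℤ) := by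
        exact_mod_cast hbound
    _ = _ := by push_cast [hsub]; rfl

/-- Let `C ≤ 𝔽_q^{n×m}` be a nonzero rank-metric code with rank
distance `d` and `V ≤ 𝔽_q^n` a subspace of dimension `v ≥ d − 1`. Then
`dim C(V,c) ≤ max{m, v}·(min{m, v} − d + 1)`. -/
theorem finrank_codeC_le
    {F : Type} [Field F] [Fintype F] {n m : ℕ}
    (C : Submodule F (Matrix (Fin n) (Fin m) F)) (hC : C ≠ ⊥)
    (d : ℕ)
    (hd : IsLeast {r : ℕ | ∃ M ∈ C, M ≠ 0 ∧ M.rank = r} d)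
    (V : Submodule F (Fin n → F)) (v : ℕ)
    (hv : finrank F V = v) (hvd : d - 1 ≤ v) :
    (finrank F (codeC C V) : ℤ) ≤ (max m v : ℤ) * ((min m v : ℤ) - d + 1) :=
  finrank_codeC_le_general C d hd V v hv hvd
end

section
/- Let m ≤ n and let C ≤ 𝔽_q^{n×m} be an MRD code with rank distance d, i.e., dim C = n(m − d + 1). Let ρ_c be the column rank function of C and let V ≤ 𝔽_q^n be a subspace of dimension v. Then: ρ_c(V) = v if v ≤ m − d + 1; ρ_c(V) = n(m − d + 1)/m if v ≥ n − d + 1; and ρ_c(V) ≥ max{1, v/m}·(m − d + 1) if m − d + 2 ≤ v ≤ n − d. -/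
open Module

/-- The orthogonal of `V ≤ 𝔽^n` with respect to the standard dot product. -/
def dotPerp {F : Type} [Field F] {n : ℕ} (V : Submodule F (Fin n → F)) :
    Submodule F (Fin n → F) where
  carrier := {w | ∀ v ∈ V, dotProduct v w = 0}
  add_mem' := by
    intro a b ha hb v hv
    rw [dotProduct_add, ha v hv, hb v hv, add_zero]
  zero_mem' := by
    intro v hv
    simp
  smul_mem' := by
    intro c a ha v hv
    rw [dotProduct_smul, ha v hv, smul_zero]

/-- The column rank function `ρ_c(V) = (dim C − dim C(V^⊥, c))/m` of a rank-metric code. -/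
noncomputable def rhoC {F : Type} [Field F] {n m : ℕ}
    (C : Submodule F (Matrix (Fin n) (Fin m) F)) (V : Submodule F (Fin n → F)) : ℚ :=
  ((Module.finrank F C : ℚ) - (Module.finrank F (codeC C (dotPerp V)) : ℚ)) / m

/-!
Write `k = m - d + 1`. A nonzero codeword vanishing on a `k`-dimensional `T ≤ 𝔽^m` would
have rank `≤ m - k < d`, so restriction to `T` embeds `C` into `Hom(T, 𝔽^n)`; as `dim C = nk`,
it is an isomorphism. Hence `C(U, c)` embeds into `Hom(T, U)`, giving `dim C(U, c) ≤ k · dim U`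
and the bound `ρ_c(V) ≥ (v/m) k`. A matrix `B` with `rk B ≤ k` that is orthogonal to `C` for
the trace pairing vanishes: test it against codewords agreeing with matrix units on
`T ⊇ rowsp B`. Dually, `C + {M : colsp M ⊆ U}` is everything whenever `codim U ≤ k`, which
gives `dim C(U, c) = dim C - m · codim U`, i.e. `ρ_c(V) = v` for `v ≤ k`. If `v ≥ n - d + 1`, every
codeword with column space in `V^⊥` has rank `< d`, so `C(V^⊥, c) = 0`. The lower bound `k`
for larger `v` follows by monotonicity of `ρ_c` from a `k`-dimensional subspace of `V`.
-/

open Matrix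

section Linear

variable {K E : Type*} [Field K] [AddCommGroup E] [Module K E] [FiniteDimensional K E]

theorem Submodule.exists_le_finrank_eq (W : Submodule K E) {k : ℕ} (hWk : finrank K W ≤ k)
    (hk : k ≤ finrank K E) : ∃ T : Submodule K E, W ≤ T ∧ finrank K T = k := by
  induction k, hWk using Nat.le_induction with
  | base => exact ⟨W, le_rfl, rfl⟩
  | succ k _ ih =>
    obtain ⟨T, hWT, hT⟩ := ih (by omega)
    obtain ⟨x, -, hx⟩ :=
      SetLike.exists_of_lt (Submodule.lt_top_of_finrank_lt_finrank (s := T) (by omega))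
    exact ⟨T ⊔ K ∙ x, hWT.trans le_sup_left, by rw [finrank_sup_span_singleton hx, hT]⟩

theorem Submodule.exists_finrank_eq_of_le (V : Submodule K E) {k : ℕ} (hk : k ≤ finrank K V) :
    ∃ T ≤ V, finrank K T = k := by
  obtain ⟨T, -, hT⟩ := (⊥ : Submodule K V).exists_le_finrank_eq (by simp) hk
  exact ⟨T.map V.subtype, Submodule.map_subtype_le V T,
    by rwa [Submodule.finrank_map_subtype_eq]⟩

end Linear

section RankMetric

variable {F : Type} [Field F] {n m : ℕ}

theorem finrank_dotPerp_add (V : Submodule F (Fin n → F)) :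
    finrank F (dotPerp V) + finrank F V = n := by
  have : dotPerp V = V.dualAnnihilator.map ((dotProductEquiv F (Fin n)).symm : _ →ₗ[F] _) := by
    ext w
    simp [Submodule.mem_map_equiv, dotPerp, Submodule.mem_dualAnnihilator, dotProduct_comm]
  rw [this, LinearEquiv.finrank_map_eq, add_comm, Subspace.finrank_add_finrank_dualAnnihilator_eq,
    finrank_fin_fun]

theorem Matrix.rank_add_finrank_le_of_mulVec_eq_zero {ι κ : Type*} [Fintype κ]
    {M : Matrix ι κ F} {T : Submodule F (κ → F)} (h : ∀ t ∈ T, M *ᵥ t = 0) :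
    M.rank + finrank F T ≤ Fintype.card κ := by
  have hrk := LinearMap.finrank_range_add_finrank_ker M.mulVecLin
  have hT : finrank F T ≤ finrank F (LinearMap.ker M.mulVecLin) :=
    Submodule.finrank_mono fun t ht => h t ht
  rw [Module.finrank_fintype_fun_eq_card] at hrk
  exact hrk ▸ Nat.add_le_add_left hT _

theorem Matrix.eq_zero_of_rank_eq_zero {ι κ : Type*} [Fintype κ] {M : Matrix ι κ F}
    (h : M.rank = 0) : M = 0 := by
  classical
  have hM := LinearMap.range_eq_bot.1 (Submodule.finrank_eq_zero.1 h)
  ext i j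
  simpa using congr_fun (LinearMap.congr_fun hM (Pi.single j 1)) i

theorem Matrix.exists_eq_sum_dotProduct {ι κ : Type*} [Fintype ι] [Fintype κ] [DecidableEq ι]
    [DecidableEq κ] (g : Module.Dual F (Matrix ι κ F)) :
    ∃ B : Matrix ι κ F, ∀ M, g M = ∑ i, M i ⬝ᵥ B i := by
  refine ⟨Matrix.of fun i j => g (single i j 1), fun M => ?_⟩
  conv_lhs => rw [matrix_eq_sum_single M]
  simp only [map_sum, dotProduct, of_apply]
  refine Finset.sum_congr rfl fun i _ => Finset.sum_congr rfl fun j _ => ?_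
  rw [← smul_eq_mul, ← map_smul, smul_single, smul_eq_mul, mul_one]

noncomputable def mulVecOn (T : Submodule F (Fin m → F)) :
    Matrix (Fin n) (Fin m) F →ₗ[F] (T →ₗ[F] Fin n → F) :=
  LinearMap.lcomp F (Fin n → F) T.subtype ∘ₗ Matrix.toLin'.toLinearMap

theorem colspLE_eq_map (U : Submodule F (Fin n → F)) :
    colspLE (m := m) U =
      (LinearMap.range (U.subtype.compRight F)).map
        (LinearMap.toMatrix' : _ ≃ₗ[F] _).toLinearMap := by
  ext M
  rw [Submodule.mem_map_equiv]
  constructor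
  · intro hM
    exact ⟨(toLin' M).codRestrict U hM, rfl⟩
  · rintro ⟨g, hg⟩ x
    rw [← toLin'_apply, ← LinearMap.toMatrix'_symm, ← hg]
    exact (g x).2

theorem finrank_colspLE (U : Submodule F (Fin n → F)) :
    finrank F (colspLE (m := m) U) = m * finrank F U := by
  have hinj : Function.Injective (U.subtype.compRight F (M := Fin m → F)) :=
    fun f g h => (LinearMap.cancel_left U.injective_subtype).1 h
  rw [colspLE_eq_map, LinearEquiv.finrank_map_eq, LinearMap.finrank_range_of_inj hinj,
    finrank_linearMap, finrank_fin_fun]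

theorem rhoC_mono (C : Submodule F (Matrix (Fin n) (Fin m) F)) {V W : Submodule F (Fin n → F)}
    (h : V ≤ W) : rhoC C V ≤ rhoC C W := by
  have hperp : dotPerp W ≤ dotPerp V := fun w hw v hv => hw v (h hv)
  have hcode : codeC C (dotPerp W) ≤ codeC C (dotPerp V) :=
    inf_le_inf_left C fun M hM x => hperp (hM x)
  unfold rhoC
  gcongr
  exact Submodule.finrank_mono hcode

section Code

variable {C : Submodule F (Matrix (Fin n) (Fin m) F)} {d : ℕ}
  (hd : ∀ M ∈ C, M ≠ 0 → d ≤ M.rank)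
include hd

theorem injective_mulVecOn_comp_subtype {D : Submodule F (Matrix (Fin n) (Fin m) F)} (hDC : D ≤ C)
    {T : Submodule F (Fin m → F)} (hT : m - d + 1 ≤ finrank F T) :
    Function.Injective (mulVecOn T ∘ₗ D.subtype) := by
  rw [injective_iff_map_eq_zero]
  rintro ⟨M, hM⟩ hMT
  rw [Submodule.mk_eq_zero]
  by_contra hM0
  have hrk := rank_add_finrank_le_of_mulVec_eq_zero (M := M) fun t ht =>
    LinearMap.congr_fun hMT ⟨t, ht⟩
  have := hd M (hDC hM) hM0
  rw [Fintype.card_fin] at hrk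
  omega

theorem codeC_eq_bot_of_finrank_lt {U : Submodule F (Fin n → F)} (hU : finrank F U < d) :
    codeC C U = ⊥ := by
  refine (Submodule.eq_bot_iff _).2 fun M ⟨hMC, hMU⟩ => ?_
  by_contra hM0
  have hrk : M.rank ≤ finrank F U :=
    Submodule.finrank_mono (by rintro _ ⟨x, rfl⟩; exact hMU x)
  have := hd M hMC hM0
  omega

theorem finrank_codeC_le_s4 (hd₁ : 1 ≤ d) (hdm : d ≤ m) (U : Submodule F (Fin n → F)) :
    finrank F (codeC C U) ≤ (m - d + 1) * finrank F U := by
  obtain ⟨T, -, hT⟩ := (⊥ : Submodule F (Fin m → F)).exists_le_finrank_eq (k := m - d + 1)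
    (by simp) (by rw [finrank_fin_fun]; omega)
  have hinj := injective_mulVecOn_comp_subtype hd inf_le_left hT.ge (D := codeC C U)
  have hrange : LinearMap.range (mulVecOn T ∘ₗ (codeC C U).subtype) ≤
      LinearMap.range (U.subtype.compRight F) := by
    rintro _ ⟨⟨M, -, hMU⟩, rfl⟩
    exact ⟨(mulVecOn T M).codRestrict U fun t => hMU t, rfl⟩
  calc finrank F (codeC C U)
      = finrank F (LinearMap.range (mulVecOn T ∘ₗ (codeC C U).subtype)) :=
        (LinearMap.finrank_range_of_inj hinj).symm
    _ ≤ finrank F (T →ₗ[F] U) :=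
        (Submodule.finrank_mono hrange).trans (LinearMap.finrank_range_le _)
    _ = (m - d + 1) * finrank F U := by rw [finrank_linearMap, hT]

theorem rhoC_eq_of_lt {V : Submodule F (Fin n → F)} (h : n < finrank F V + d) :
    rhoC C V = finrank F C / m := by
  have := finrank_dotPerp_add V
  rw [rhoC, codeC_eq_bot_of_finrank_lt hd (by omega), finrank_bot]
  simp

variable (hMRD : finrank F C = n * (m - d + 1))
include hMRD

theorem exists_mem_mulVec_eq_on {T : Submodule F (Fin m → F)} (hT : finrank F T = m - d + 1)
    (N : Matrix (Fin n) (Fin m) F) : ∃ M ∈ C, ∀ t ∈ T, M *ᵥ t = N *ᵥ t := by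
  have hsurj := (LinearMap.injective_iff_surjective_of_finrank_eq_finrank
    (by rw [finrank_linearMap, hT, hMRD, finrank_fin_fun, mul_comm])).1
    (injective_mulVecOn_comp_subtype hd le_rfl hT.ge)
  obtain ⟨⟨M, hM⟩, hMN⟩ := hsurj (mulVecOn T N)
  exact ⟨M, hM, fun t ht => LinearMap.congr_fun hMN ⟨t, ht⟩⟩

/-- The dual of an MRD code has minimum rank distance at least `m - d + 2`. -/
theorem eq_zero_of_forall_sum_dotProduct_eq_zero (hd₁ : 1 ≤ d) (hdm : d ≤ m)
    {B : Matrix (Fin n) (Fin m) F}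
    (hB : ∀ M ∈ C, ∑ i, M i ⬝ᵥ B i = 0) (hrank : B.rank ≤ m - d + 1) : B = 0 := by
  obtain ⟨T, hBT, hT⟩ := (Submodule.span F (Set.range B.row)).exists_le_finrank_eq
    (k := m - d + 1) (by rwa [← rank_eq_finrank_span_row]) (by rw [finrank_fin_fun]; omega)
  have hrow : ∀ i, B i ∈ T := fun i => hBT (Submodule.subset_span ⟨i, rfl⟩)
  ext i₀ j₀
  obtain ⟨M, hM, hMN⟩ := exists_mem_mulVec_eq_on hd hMRD hT (single i₀ j₀ 1)
  calc B i₀ j₀ = ∑ i, (single i₀ j₀ 1 *ᵥ B i) i := by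
        simp [mulVec, dotProduct, single_apply, ite_and]
    _ = ∑ i, (M *ᵥ B i) i := Finset.sum_congr rfl fun i _ => by rw [hMN _ (hrow i)]
    _ = 0 := hB M hM

theorem sup_colspLE_eq_top (hd₁ : 1 ≤ d) (hdm : d ≤ m) {U : Submodule F (Fin n → F)}
    (hU : n ≤ finrank F U + (m - d + 1)) : C ⊔ colspLE U = ⊤ := by
  by_contra hne
  obtain ⟨g, hg0, hgC⟩ :=
    Submodule.exists_dual_map_eq_bot_of_lt_top (lt_top_iff_ne_top.2 hne) inferInstance
  have hg : ∀ M ∈ C ⊔ colspLE U, g M = 0 := fun M hM =>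
    (Submodule.mem_bot F).1 (hgC ▸ Submodule.mem_map_of_mem hM)
  obtain ⟨B, hB⟩ := exists_eq_sum_dotProduct g
  have hBU : ∀ u ∈ U, Bᵀ *ᵥ u = 0 := by
    intro u hu
    ext j
    have hmem : vecMulVec u (Pi.single j 1) ∈ colspLE U := fun x => by
      rw [show vecMulVec u (Pi.single j 1) *ᵥ x = x j • u by
        ext; simp [vecMulVec, mulVec, dotProduct, Pi.single_apply, mul_comm]]
      exact U.smul_mem _ hu
    simpa [hB, mulVec, dotProduct, vecMulVec, Pi.single_apply, mul_comm] using
      hg _ (Submodule.mem_sup_right hmem)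
  have hrank : B.rank ≤ m - d + 1 := by
    have := rank_add_finrank_le_of_mulVec_eq_zero hBU
    rw [rank_transpose, Fintype.card_fin] at this
    omega
  have hB0 := eq_zero_of_forall_sum_dotProduct_eq_zero hd hMRD hd₁ hdm
    (fun M hM => (hB M).symm.trans (hg M (Submodule.mem_sup_left hM))) hrank
  exact hg0 (LinearMap.ext fun M => by simp [hB, hB0, dotProduct])

theorem finrank_codeC_add_mul (hd₁ : 1 ≤ d) (hdm : d ≤ m) {U : Submodule F (Fin n → F)}
    {v : ℕ} (hU : finrank F U + v = n) (hv : v ≤ m - d + 1) :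
    finrank F (codeC C U) + m * v = finrank F C := by
  have h := Submodule.finrank_sup_add_finrank_inf_eq C (colspLE U)
  rw [sup_colspLE_eq_top hd hMRD hd₁ hdm (by omega), finrank_top, finrank_matrix,
    finrank_colspLE] at h
  simp only [Fintype.card_fin, finrank_self, mul_one] at h
  have hn : n * m = m * finrank F U + m * v := by rw [← mul_add, hU, mul_comm]
  unfold codeC
  linarith

theorem rhoC_eq_finrank (hd₁ : 1 ≤ d) (hdm : d ≤ m) {V : Submodule F (Fin n → F)}
    (hV : finrank F V ≤ m - d + 1) : rhoC C V = finrank F V := by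
  have h := finrank_codeC_add_mul hd hMRD hd₁ hdm (finrank_dotPerp_add V) hV
  have hm : (m : ℚ) ≠ 0 := by exact_mod_cast (by omega : m ≠ 0)
  rw [rhoC, ← h]
  push_cast
  field_simp
  ring

theorem mul_finrank_div_le_rhoC (hd₁ : 1 ≤ d) (hdm : d ≤ m) (V : Submodule F (Fin n → F)) :
    ((m - d + 1 : ℕ) : ℚ) * finrank F V / m ≤ rhoC C V := by
  have hle := finrank_codeC_le_s4 hd hd₁ hdm (dotPerp V)
  have hperp := finrank_dotPerp_add V
  set k := m - d + 1
  unfold rhoC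
  gcongr
  have hle' : (finrank F (codeC C (dotPerp V)) : ℚ) ≤ k * finrank F (dotPerp V) := by
    exact_mod_cast hle
  have hperp' : (n : ℚ) = finrank F (dotPerp V) + finrank F V := by exact_mod_cast hperp.symm
  rw [hMRD, Nat.cast_mul, hperp']
  linarith

end Code

end RankMetric

theorem rhoC_of_MRD_general
    {F : Type} [Field F] {n m : ℕ}
    (C : Submodule F (Matrix (Fin n) (Fin m) F))
    (d : ℕ)
    (hd : IsLeast {r : ℕ | ∃ M ∈ C, M ≠ 0 ∧ M.rank = r} d)
    (hMRD : finrank F C = n * (m - d + 1))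
    (V : Submodule F (Fin n → F)) (v : ℕ) (hv : finrank F V = v) :
    (v ≤ m - d + 1 → rhoC C V = (v : ℚ)) ∧
    (n - d + 1 ≤ v → rhoC C V = (n : ℚ) * ((m : ℚ) - (d : ℚ) + 1) / (m : ℚ)) ∧
    (m - d + 2 ≤ v → v ≤ n - d →
      max 1 ((v : ℚ) / (m : ℚ)) * ((m : ℚ) - (d : ℚ) + 1) ≤ rhoC C V) := by
  have hrank : ∀ M ∈ C, M ≠ 0 → d ≤ M.rank := fun M hM hM0 => hd.2 ⟨M, hM, hM0, rfl⟩
  obtain ⟨M₀, -, hM₀, hM₀d⟩ := hd.1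
  have hd₁ : 1 ≤ d := hM₀d ▸ Nat.one_le_iff_ne_zero.2 (mt eq_zero_of_rank_eq_zero hM₀)
  have hdm : d ≤ m := hM₀d ▸ M₀.rank_le_width
  have hk : ((m - d + 1 : ℕ) : ℚ) = m - d + 1 := by
    rw [Nat.cast_add, Nat.cast_sub hdm, Nat.cast_one]
  subst hv
  refine ⟨rhoC_eq_finrank hrank hMRD hd₁ hdm, fun hv => ?_, fun hv _ => ?_⟩
  · rw [rhoC_eq_of_lt hrank (by omega), hMRD, Nat.cast_mul, hk]
  · obtain ⟨V', hV'V, hV'⟩ := V.exists_finrank_eq_of_le (k := m - d + 1) (by omega)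
    rw [← hk, max_mul_of_nonneg _ _ (Nat.cast_nonneg _), max_le_iff, one_mul, mul_comm,
      ← mul_div_assoc]
    refine ⟨?_, mul_finrank_div_le_rhoC hrank hMRD hd₁ hdm V⟩
    calc ((m - d + 1 : ℕ) : ℚ) = rhoC C V' := by
          rw [rhoC_eq_finrank hrank hMRD hd₁ hdm hV'.le, hV']
      _ ≤ rhoC C V := rhoC_mono C hV'V

/-- For an MRD code `C ≤ 𝔽_q^{n×m}` with `m ≤ n` and rank distance `d`,
the column rank function satisfies: `ρ_c(V) = v` if `v ≤ m − d + 1`;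
`ρ_c(V) = n(m − d + 1)/m` if `v ≥ n − d + 1`; and
`ρ_c(V) ≥ max{1, v/m}·(m − d + 1)` if `m − d + 2 ≤ v ≤ n − d`. -/
theorem rhoC_of_MRD
    {F : Type} [Field F] [Fintype F] {n m : ℕ} (hmn : m ≤ n)
    (C : Submodule F (Matrix (Fin n) (Fin m) F)) (hC : C ≠ ⊥)
    (d : ℕ)
    (hd : IsLeast {r : ℕ | ∃ M ∈ C, M ≠ 0 ∧ M.rank = r} d)
    (hMRD : finrank F C = n * (m - d + 1))
    (V : Submodule F (Fin n → F)) (v : ℕ) (hv : finrank F V = v) :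
    (v ≤ m - d + 1 → rhoC C V = (v : ℚ)) ∧
    (n - d + 1 ≤ v → rhoC C V = (n : ℚ) * ((m : ℚ) - (d : ℚ) + 1) / (m : ℚ)) ∧
    (m - d + 2 ≤ v → v ≤ n - d →
      max 1 ((v : ℚ) / (m : ℚ)) * ((m : ℚ) - (d : ℚ) + 1) ≤ rhoC C V) :=
  rhoC_of_MRD_general C d hd hMRD V v hv
end

section
/- Let 𝔽_{q^m} be a degree-m field extension of 𝔽_q, fix an 𝔽_q-basis of 𝔽_{q^m} with coordinate map ψ: 𝔽_{q^m} → 𝔽_q^m, and let Ψ: 𝔽_{q^m}^n → 𝔽_q^{n×m} be the entrywise extension of ψ. Let C ≤ 𝔽_{q^m}^n be an 𝔽_{q^m}-linear code with generator matrix G ∈ 𝔽_{q^m}^{k×n}, where k = dim_{𝔽_{q^m}} C, and let ρ_c be the column rank function of the rank-metric code Ψ(C) ≤ 𝔽_q^{n×m}. If V ≤ 𝔽_q^n is a subspace with V = colsp(Y) for a matrix Y ∈ 𝔽_q^{n×t}, then ρ_c(V) = rk_{𝔽_{q^m}}(GY). -/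
open Module

/-! The coordinate expansion `Ψ` is `𝔽_q`-linear and injective, so
`dim_{𝔽_q} Ψ(S) = m · dim_{𝔽_{q^m}} S`. Pairing `v ∈ 𝔽_q^n` with the columns of `Ψ(x)`
gives the coordinates of `∑ vᵢ xᵢ`, so `Ψ(x)` has column space in `V^⊥` iff `x Y = 0`. Hence
`C(V^⊥, c) = Ψ(C ∩ ker(· Y))`, and rank–nullity for `x ↦ x Y` on `C = rowsp(G)` gives
`ρ_c(V) = dim C − dim (C ∩ ker(· Y)) = dim rowsp(G Y) = rk(G Y)`. -/

open Matrix

theorem mem_colspLE_dotPerp_iff {F : Type} [Field F] {n m : ℕ} (V : Submodule F (Fin n → F))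
    (M : Matrix (Fin n) (Fin m) F) : M ∈ colspLE (dotPerp V) ↔ ∀ v ∈ V, v ᵥ* M = 0 := by
  change (∀ c, ∀ v ∈ V, v ⬝ᵥ M *ᵥ c = 0) ↔ _
  simp_rw [dotProduct_mulVec]
  exact ⟨fun h v hv => dotProduct_eq_zero_iff.mp fun c => h c v hv,
    fun h c v hv => by rw [h v hv, zero_dotProduct]⟩

theorem Matrix.vecMul_map_algebraMap_eq_zero_iff {F K ι τ : Type*} [CommRing F] [CommRing K]
    [Algebra F K] [Fintype ι] [Fintype τ] [DecidableEq τ] (x : ι → K) (Y : Matrix ι τ F) :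
    x ᵥ* Y.map (algebraMap F K) = 0 ↔ ∀ u : τ → F, ∑ i, (Y *ᵥ u) i • x i = 0 := by
  have hsum : ∀ u, ∑ i, (Y *ᵥ u) i • x i =
      x ᵥ* Y.map (algebraMap F K) ⬝ᵥ (algebraMap F K ∘ u) := by
    intro u
    rw [← dotProduct_mulVec, dotProduct_comm]
    simp only [dotProduct, Algebra.smul_def, RingHom.map_mulVec]
  simp_rw [hsum]
  refine ⟨fun h u => by rw [h, zero_dotProduct], fun h => ?_⟩
  funext s
  have hs : algebraMap F K ∘ Pi.single s 1 = Pi.single s 1 := by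
    ext s'
    by_cases h : s' = s <;> simp [h]
  simpa [hs, dotProduct_single] using h (Pi.single s 1)

theorem Submodule.finrank_map_add_finrank_inf_ker {K V W : Type*} [DivisionRing K]
    [AddCommGroup V] [Module K V] [AddCommGroup W] [Module K W] (f : V →ₗ[K] W)
    (S : Submodule K V) [FiniteDimensional K S] :
    finrank K (S.map f) + finrank K (S ⊓ LinearMap.ker f : Submodule K V) = finrank K S := by
  rw [← LinearMap.finrank_range_add_finrank_ker (f ∘ₗ S.subtype), LinearMap.range_comp,
    Submodule.range_subtype, LinearMap.ker_comp,
    ← LinearEquiv.finrank_eq (Submodule.comapSubtypeEquivOfLe inf_le_left), Submodule.comap_inf,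
    Submodule.comap_subtype_self, top_inf_eq]

theorem Matrix.finrank_map_range_vecMulLinear {K ι κ τ : Type*} [Field K] [Fintype ι]
    [Fintype κ] [Fintype τ] (A : Matrix ι κ K) (B : Matrix κ τ K) :
    finrank K ((LinearMap.range A.vecMulLinear).map B.vecMulLinear) = (A * B).rank := by
  have hcomp : B.vecMulLinear ∘ₗ A.vecMulLinear = (A * B).vecMulLinear :=
    LinearMap.ext fun v => vecMul_vecMul v A B
  rw [← LinearMap.range_comp, hcomp, rank_eq_finrank_span_row, ← range_vecMulLinear]

theorem Submodule.finrank_map_restrictScalars_of_injective {F K V W : Type*} [Field F] [Field K]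
    [Algebra F K] [AddCommGroup V] [Module K V] [Module F V] [IsScalarTower F K V]
    [AddCommGroup W] [Module F W] {f : V →ₗ[F] W} (hf : Function.Injective f)
    (S : Submodule K V) :
    finrank F ((S.restrictScalars F).map f) = finrank F K * finrank K S := by
  rw [← (Submodule.equivMapOfInjective f hf _).finrank_eq,
    ((S.restrictScalarsEquiv F K V).restrictScalars F).finrank_eq, finrank_mul_finrank]

section CoordinateMatrix

variable {F K : Type*} [Field F] [Field K] [Algebra F K] {ι β : Type*}
  {b : Basis β F K} {Psi : (ι → K) →ₗ[F] Matrix ι β F}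

theorem injective_of_apply_eq_repr
    (hPsi : ∀ (x : ι → K) (i : ι) (j : β), Psi x i j = b.repr (x i) j) :
    Function.Injective Psi := by
  intro x y hxy
  funext i
  apply b.repr.injective
  ext j
  simpa only [hPsi] using congrFun (congrFun hxy i) j

theorem vecMul_eq_repr_sum_smul [Fintype ι]
    (hPsi : ∀ (x : ι → K) (i : ι) (j : β), Psi x i j = b.repr (x i) j)
    (v : ι → F) (x : ι → K) :
    v ᵥ* Psi x = ⇑(b.repr (∑ i, v i • x i)) := by
  ext j
  simp [vecMul, dotProduct, hPsi, map_sum]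

end CoordinateMatrix

theorem apply_mem_colspLE_dotPerp_range_iff {F K : Type} [Field F] [Field K] [Algebra F K]
    {m n : ℕ} {τ : Type*} [Fintype τ] [DecidableEq τ] {b : Basis (Fin m) F K}
    {Psi : (Fin n → K) →ₗ[F] Matrix (Fin n) (Fin m) F}
    (hPsi : ∀ (x : Fin n → K) (i : Fin n) (j : Fin m), Psi x i j = b.repr (x i) j)
    (Y : Matrix (Fin n) τ F) (x : Fin n → K) :
    Psi x ∈ colspLE (dotPerp (LinearMap.range Y.mulVecLin)) ↔
      x ᵥ* Y.map (algebraMap F K) = 0 := by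
  rw [mem_colspLE_dotPerp_iff, vecMul_map_algebraMap_eq_zero_iff]
  simp only [LinearMap.mem_range, forall_exists_index, forall_apply_eq_imp_iff,
    mulVecLin_apply, vecMul_eq_repr_sum_smul hPsi, Finsupp.coe_eq_zero,
    LinearEquiv.map_eq_zero_iff]

theorem codeC_map_dotPerp_range_eq_map_inf_ker {F K : Type} [Field F] [Field K] [Algebra F K]
    {m n : ℕ} {τ : Type*} [Fintype τ] [DecidableEq τ] {b : Basis (Fin m) F K}
    {Psi : (Fin n → K) →ₗ[F] Matrix (Fin n) (Fin m) F}
    (hPsi : ∀ (x : Fin n → K) (i : Fin n) (j : Fin m), Psi x i j = b.repr (x i) j)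
    (C : Submodule K (Fin n → K)) (Y : Matrix (Fin n) τ F) :
    codeC ((C.restrictScalars F).map Psi) (dotPerp (LinearMap.range Y.mulVecLin)) =
      ((C ⊓ LinearMap.ker (Y.map (algebraMap F K)).vecMulLinear).restrictScalars F).map Psi := by
  ext M
  simp only [codeC, Submodule.mem_inf, Submodule.mem_map, Submodule.restrictScalars_mem,
    LinearMap.mem_ker, vecMulLinear_apply]
  constructor
  · rintro ⟨⟨x, hxC, rfl⟩, hx⟩
    exact ⟨x, ⟨hxC, (apply_mem_colspLE_dotPerp_range_iff hPsi Y x).mp hx⟩, rfl⟩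
  · rintro ⟨x, ⟨hxC, hx⟩, rfl⟩
    exact ⟨⟨x, hxC, rfl⟩, (apply_mem_colspLE_dotPerp_range_iff hPsi Y x).mpr hx⟩

theorem rhoC_eq_rank_G_mul_Y_general
    {F K : Type} [Field F] [Field K] [Algebra F K]
    {m n k t : ℕ}
    (b : Basis (Fin m) F K)
    (Psi : (Fin n → K) →ₗ[F] Matrix (Fin n) (Fin m) F)
    (hPsi : ∀ (x : Fin n → K) (i : Fin n) (j : Fin m), Psi x i j = b.repr (x i) j)
    (C : Submodule K (Fin n → K))
    (G : Matrix (Fin k) (Fin n) K)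
    (hGspan : LinearMap.range G.vecMulLinear = C)
    (V : Submodule F (Fin n → F)) (Y : Matrix (Fin n) (Fin t) F)
    (hV : LinearMap.range Y.mulVecLin = V) :
    rhoC (Submodule.map Psi (C.restrictScalars F)) V
      = ((G * Y.map (algebraMap F K)).rank : ℚ) := by
  subst hGspan hV
  have : Module.Finite F K := .of_basis b
  have hm : finrank F K = m := by rw [finrank_eq_card_basis b, Fintype.card_fin]
  have hm0 : (m : ℚ) ≠ 0 := by rw [← hm]; exact_mod_cast finrank_pos.ne'
  have hinj := injective_of_apply_eq_repr hPsi
  have hRN := Submodule.finrank_map_add_finrank_inf_ker (Y.map (algebraMap F K)).vecMulLinear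
    (LinearMap.range G.vecMulLinear)
  rw [finrank_map_range_vecMulLinear] at hRN
  rw [rhoC, codeC_map_dotPerp_range_eq_map_inf_ker hPsi,
    Submodule.finrank_map_restrictScalars_of_injective hinj,
    Submodule.finrank_map_restrictScalars_of_injective hinj, hm, ← hRN]
  push_cast
  field_simp
  ring

/-- Let `𝔽_{q^m}/𝔽_q` be a degree-`m` extension with coordinate map
`ψ` (entrywise extension `Ψ`), let `C ≤ 𝔽_{q^m}^n` be `𝔽_{q^m}`-linear with generator
matrix `G ∈ 𝔽_{q^m}^{k×n}`, and let `ρ_c` be the column rank function of `Ψ(C)`.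
If `V = colsp(Y)` for `Y ∈ 𝔽_q^{n×t}`, then `ρ_c(V) = rk_{𝔽_{q^m}}(GY)`. -/
theorem rhoC_eq_rank_G_mul_Y
    {F K : Type} [Field F] [Fintype F] [Field K] [Algebra F K]
    {m n k t : ℕ}
    (b : Basis (Fin m) F K)
    (Psi : (Fin n → K) →ₗ[F] Matrix (Fin n) (Fin m) F)
    (hPsi : ∀ (x : Fin n → K) (i : Fin n) (j : Fin m), Psi x i j = b.repr (x i) j)
    (C : Submodule K (Fin n → K))
    (G : Matrix (Fin k) (Fin n) K)
    (hk : finrank K C = k)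
    (hGspan : LinearMap.range G.vecMulLinear = C)
    (hGindep : LinearIndependent K (fun i : Fin k => G i))
    (V : Submodule F (Fin n → F)) (Y : Matrix (Fin n) (Fin t) F)
    (hV : LinearMap.range Y.mulVecLin = V) :
    rhoC (Submodule.map Psi (C.restrictScalars F)) V
      = ((G * Y.map (algebraMap F K)).rank : ℚ) :=
  rhoC_eq_rank_G_mul_Y_general b Psi hPsi C G hGspan V Y hV
end

section
/- Let (𝔽_q^n, ρ) be a q-matroid and let B = {v₁, …, v_n} be a basis of 𝔽_q^n. Define r: 2^B → ℕ₀ by r(A) = ρ(⟨A⟩), the value of ρ on the 𝔽_q-span of A. Then (B, r) is a matroid, i.e., r satisfies r(A) ≤ |A| for all A ⊆ B, r(A) ≤ r(A') whenever A ⊆ A' ⊆ B, and r(A∪A') + r(A∩A') ≤ r(A) + r(A') for all A, A' ⊆ B. -/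
/-!
The map `A ↦ ⟨A⟩` from subsets of `B` to subspaces is monotone and turns unions into sums,
while `⟨A ∩ A'⟩ ≤ ⟨A⟩ ∩ ⟨A'⟩`. Hence monotonicity and submodularity of `ρ` pull back to `r`,
and `ρ(⟨A⟩) ≤ dim ⟨A⟩ ≤ |A|` gives the cardinality bound.
-/

open Module Submodule

section SpanImage

variable {R M ι : Type*} [Ring R] [AddCommGroup M] [Module R M]

lemma finrank_span_image_finset_le_card [StrongRankCondition R] (v : ι → M) (A : Finset ι) :
    finrank R (span R (v '' A)) ≤ A.card := by
  classical
  calc finrank R (span R (v '' A)) = finrank R (span R (A.image v : Set M)) := by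
        rw [Finset.coe_image]
    _ ≤ (A.image v).card := finrank_span_finset_le_card _
    _ ≤ A.card := Finset.card_image_le

lemma monotone_span_image (v : ι → M) : Monotone fun A : Finset ι => span R (v '' A) :=
  fun _ _ h => span_mono (Set.image_mono (Finset.coe_subset.mpr h))

lemma span_image_union [DecidableEq ι] (v : ι → M) (A A' : Finset ι) :
    span R (v '' ↑(A ∪ A')) = span R (v '' A) ⊔ span R (v '' A') := by
  rw [Finset.coe_union, Set.image_union, span_union]

end SpanImage

lemma submodular_comp_of_map_sup {α β γ : Type*} [Lattice α] [Lattice β] [AddCommMonoid γ]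
    [PartialOrder γ] [IsOrderedAddMonoid γ] {ρ : β → γ} (hρ : Monotone ρ)
    (hρ_sub : ∀ x y, ρ (x ⊔ y) + ρ (x ⊓ y) ≤ ρ x + ρ y) {f : α → β} (hf : Monotone f)
    (hf_sup : ∀ a b, f (a ⊔ b) = f a ⊔ f b) (a b : α) :
    ρ (f (a ⊔ b)) + ρ (f (a ⊓ b)) ≤ ρ (f a) + ρ (f b) :=
  calc ρ (f (a ⊔ b)) + ρ (f (a ⊓ b)) ≤ ρ (f a ⊔ f b) + ρ (f a ⊓ f b) := by
        rw [hf_sup]; exact add_le_add le_rfl (hρ (hf.map_inf_le a b))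
    _ ≤ ρ (f a) + ρ (f b) := hρ_sub _ _

theorem induced_matroid_of_qMatroid_general
    {F : Type} [Field F] {n : ℕ}
    (ρ : Submodule F (Fin n → F) → ℕ)
    (hR1 : ∀ V : Submodule F (Fin n → F), ρ V ≤ finrank F V)
    (hR2 : ∀ V W : Submodule F (Fin n → F), V ≤ W → ρ V ≤ ρ W)
    (hR3 : ∀ V W : Submodule F (Fin n → F), ρ (V ⊔ W) + ρ (V ⊓ W) ≤ ρ V + ρ W)
    (B : Basis (Fin n) F (Fin n → F))
    (r : Finset (Fin n) → ℕ)
    (hr : ∀ A : Finset (Fin n), r A = ρ (Submodule.span F (⇑B '' ↑A))) :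
    (∀ A : Finset (Fin n), r A ≤ A.card) ∧
    (∀ A A' : Finset (Fin n), A ⊆ A' → r A ≤ r A') ∧
    (∀ A A' : Finset (Fin n), r (A ∪ A') + r (A ∩ A') ≤ r A + r A') := by
  have hρ : Monotone ρ := fun V W => hR2 V W
  simp only [hr]
  exact ⟨fun A => (hR1 _).trans (finrank_span_image_finset_le_card B A),
    fun A A' h => hρ (monotone_span_image B h),
    submodular_comp_of_map_sup hρ hR3 (monotone_span_image B) (span_image_union B)⟩

/-- Let `(𝔽_q^n, ρ)` be a `q`-matroid and `B = {v₁,…,vₙ}` a basis of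
`𝔽_q^n`. Then `r(A) = ρ(⟨A⟩)` defines a matroid rank function on `B`. -/
theorem induced_matroid_of_qMatroid
    {F : Type} [Field F] [Fintype F] {n : ℕ}
    (ρ : Submodule F (Fin n → F) → ℕ)
    (hR1 : ∀ V : Submodule F (Fin n → F), ρ V ≤ finrank F V)
    (hR2 : ∀ V W : Submodule F (Fin n → F), V ≤ W → ρ V ≤ ρ W)
    (hR3 : ∀ V W : Submodule F (Fin n → F), ρ (V ⊔ W) + ρ (V ⊓ W) ≤ ρ V + ρ W)
    (B : Basis (Fin n) F (Fin n → F))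
    (r : Finset (Fin n) → ℕ)
    (hr : ∀ A : Finset (Fin n), r A = ρ (Submodule.span F (⇑B '' ↑A))) :
    (∀ A : Finset (Fin n), r A ≤ A.card) ∧
    (∀ A A' : Finset (Fin n), A ⊆ A' → r A ≤ r A') ∧
    (∀ A A' : Finset (Fin n), r (A ∪ A') + r (A ∩ A') ≤ r A + r A') :=
  induced_matroid_of_qMatroid_general ρ hR1 hR2 hR3 B r hr
end

section
/- Let B be a finite set with |B| = n, let k ∈ {1, …, n}, and let 𝒜 be a collection of k-element subsets of B such that |A ∩ A'| ≤ k − 2 for all distinct A, A' ∈ 𝒜. Define r: 2^B → ℕ₀ by r(X) = k − 1 if X ∈ 𝒜 and r(X) = min{|X|, k} otherwise. Then r is a matroid rank function on B, i.e., r(X) ≤ |X| for all X, r is monotone with respect to inclusion, and r(X∪Y) + r(X∩Y) ≤ r(X) + r(Y) for all X, Y ⊆ B. -/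
/-!
The rank `r` differs from the truncated cardinality `min |X| k`, which is a matroid rank
function, only by dropping to `k - 1` on the `k`-sets of `𝒜`. Submodularity can only fail
at a pair with `X ∈ 𝒜`, and there, unless `X` and `Y` are comparable, `X ∩ Y` is a proper
subset of both: it has fewer than `k` elements, and fewer than `k - 1` if `Y ∈ 𝒜` too, so
`r (X ∩ Y) < r Y` pays for the unit lost at `X`.
-/

open Finset

section PavingRank

variable {α : Type*} {k : ℕ} {𝒜 : Set (Finset α)} {X Y : Finset α}

open scoped Classical in
noncomputable def pavingRank (k : ℕ) (𝒜 : Set (Finset α)) (X : Finset α) : ℕ :=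
  if X ∈ 𝒜 then k - 1 else min #X k

theorem pavingRank_of_mem (hX : X ∈ 𝒜) : pavingRank k 𝒜 X = k - 1 := by
  classical
  simp [pavingRank, hX]

theorem pavingRank_of_notMem (hX : X ∉ 𝒜) : pavingRank k 𝒜 X = min #X k := by
  classical
  simp [pavingRank, hX]

theorem pavingRank_le_min_card (h𝒜card : ∀ A ∈ 𝒜, #A = k) (X : Finset α) :
    pavingRank k 𝒜 X ≤ min #X k := by
  by_cases hX : X ∈ 𝒜
  · rw [pavingRank_of_mem hX, h𝒜card X hX, min_self]
    exact Nat.sub_le _ _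
  · rw [pavingRank_of_notMem hX]

theorem pavingRank_le_card (h𝒜card : ∀ A ∈ 𝒜, #A = k) (X : Finset α) :
    pavingRank k 𝒜 X ≤ #X :=
  (pavingRank_le_min_card h𝒜card X).trans (min_le_left _ _)

theorem pavingRank_mono (h𝒜card : ∀ A ∈ 𝒜, #A = k) (hXY : X ⊆ Y) :
    pavingRank k 𝒜 X ≤ pavingRank k 𝒜 Y := by
  by_cases hY : Y ∈ 𝒜
  · obtain rfl | hne := eq_or_ne X Y
    · rfl
    have hlt : #X < k := h𝒜card Y hY ▸ card_lt_card (ssubset_of_subset_of_ne hXY hne)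
    rw [pavingRank_of_mem hY]
    have := pavingRank_le_card h𝒜card X
    omega
  · rw [pavingRank_of_notMem hY]
    exact (pavingRank_le_min_card h𝒜card X).trans (min_le_min_right k (card_le_card hXY))

variable [DecidableEq α]

theorem min_card_union_add_min_card_inter_le (k : ℕ) (X Y : Finset α) :
    min #(X ∪ Y) k + min #(X ∩ Y) k ≤ min #X k + min #Y k := by
  have := card_union_add_card_inter X Y
  have := card_le_card (inter_subset_left : X ∩ Y ⊆ X)
  have := card_le_card (inter_subset_right : X ∩ Y ⊆ Y)
  have := card_le_card (subset_union_left : X ⊆ X ∪ Y)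
  have := card_le_card (subset_union_right : Y ⊆ X ∪ Y)
  omega

theorem pavingRank_inter_lt_right (h𝒜card : ∀ A ∈ 𝒜, #A = k)
    (h𝒜int : ∀ A ∈ 𝒜, ∀ A' ∈ 𝒜, A ≠ A' → ((A ∩ A').card : ℤ) ≤ (k : ℤ) - 2)
    (hX : X ∈ 𝒜) (hXY : ¬X ⊆ Y) (hYX : ¬Y ⊆ X) :
    pavingRank k 𝒜 (X ∩ Y) < pavingRank k 𝒜 Y := by
  have hleft : #(X ∩ Y) < k :=
    h𝒜card X hX ▸ card_lt_card (ssubset_of_subset_not_subset inter_subset_left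
      fun h ↦ hXY (h.trans inter_subset_right))
  have hright : #(X ∩ Y) < #Y :=
    card_lt_card (ssubset_of_subset_not_subset inter_subset_right
      fun h ↦ hYX (h.trans inter_subset_left))
  have hle := pavingRank_le_card h𝒜card (X ∩ Y)
  by_cases hY : Y ∈ 𝒜
  · have := h𝒜int X hX Y hY (by rintro rfl; exact hXY subset_rfl)
    rw [pavingRank_of_mem hY]
    omega
  · rw [pavingRank_of_notMem hY]
    omega

theorem pavingRank_submodular_of_mem (h𝒜card : ∀ A ∈ 𝒜, #A = k)
    (h𝒜int : ∀ A ∈ 𝒜, ∀ A' ∈ 𝒜, A ≠ A' → ((A ∩ A').card : ℤ) ≤ (k : ℤ) - 2)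
    (hX : X ∈ 𝒜) :
    pavingRank k 𝒜 (X ∪ Y) + pavingRank k 𝒜 (X ∩ Y) ≤ pavingRank k 𝒜 X + pavingRank k 𝒜 Y := by
  by_cases hXY : X ⊆ Y
  · rw [union_eq_right.2 hXY, inter_eq_left.2 hXY, add_comm]
  by_cases hYX : Y ⊆ X
  · rw [union_eq_left.2 hYX, inter_eq_right.2 hYX]
  obtain ⟨x, hx, -⟩ := not_subset.1 hXY
  have hk : 1 ≤ k := h𝒜card X hX ▸ card_pos.2 ⟨x, hx⟩
  have hunion := (pavingRank_le_min_card h𝒜card (X ∪ Y)).trans (min_le_right _ _)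
  have hinter := pavingRank_inter_lt_right h𝒜card h𝒜int hX hXY hYX
  rw [pavingRank_of_mem hX]
  omega

theorem pavingRank_submodular (h𝒜card : ∀ A ∈ 𝒜, #A = k)
    (h𝒜int : ∀ A ∈ 𝒜, ∀ A' ∈ 𝒜, A ≠ A' → ((A ∩ A').card : ℤ) ≤ (k : ℤ) - 2)
    (X Y : Finset α) :
    pavingRank k 𝒜 (X ∪ Y) + pavingRank k 𝒜 (X ∩ Y) ≤ pavingRank k 𝒜 X + pavingRank k 𝒜 Y := by
  by_cases hX : X ∈ 𝒜
  · exact pavingRank_submodular_of_mem h𝒜card h𝒜int hX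
  by_cases hY : Y ∈ 𝒜
  · rw [union_comm, inter_comm, add_comm (pavingRank k 𝒜 X)]
    exact pavingRank_submodular_of_mem h𝒜card h𝒜int hY
  rw [pavingRank_of_notMem hX, pavingRank_of_notMem hY]
  exact (add_le_add (pavingRank_le_min_card h𝒜card _) (pavingRank_le_min_card h𝒜card _)).trans
    (min_card_union_add_min_card_inter_le k X Y)

end PavingRank

theorem paving_matroid_rank_function_general
    {B : Type} [DecidableEq B] {k : ℕ}
    (𝒜 : Set (Finset B))
    (h𝒜card : ∀ A ∈ 𝒜, A.card = k)
    (h𝒜int : ∀ A ∈ 𝒜, ∀ A' ∈ 𝒜, A ≠ A' → ((A ∩ A').card : ℤ) ≤ (k : ℤ) - 2)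
    (r : Finset B → ℕ)
    (hr𝒜 : ∀ X ∈ 𝒜, r X = k - 1)
    (hr : ∀ X ∉ 𝒜, r X = min X.card k) :
    (∀ X : Finset B, r X ≤ X.card) ∧
    (∀ X Y : Finset B, X ⊆ Y → r X ≤ r Y) ∧
    (∀ X Y : Finset B, r (X ∪ Y) + r (X ∩ Y) ≤ r X + r Y) := by
  obtain rfl : r = pavingRank k 𝒜 := funext fun X ↦ by
    by_cases hX : X ∈ 𝒜
    · rw [hr𝒜 X hX, pavingRank_of_mem hX]
    · rw [hr X hX, pavingRank_of_notMem hX]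
  exact ⟨pavingRank_le_card h𝒜card, fun _ _ ↦ pavingRank_mono h𝒜card,
    pavingRank_submodular h𝒜card h𝒜int⟩

/-- Let `B` be a finite set with `|B| = n`, `k ∈ {1,…,n}`, and `𝒜` a
collection of `k`-subsets of `B` with pairwise intersections of size at most `k − 2`.
Then `r(X) = k − 1` for `X ∈ 𝒜` and `r(X) = min{|X|, k}` otherwise defines a matroid
rank function on `B`. -/
theorem paving_matroid_rank_function
    {B : Type} [Fintype B] [DecidableEq B] {n k : ℕ}
    (hcard : Fintype.card B = n) (hk1 : 1 ≤ k) (hkn : k ≤ n)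
    (𝒜 : Set (Finset B))
    (h𝒜card : ∀ A ∈ 𝒜, A.card = k)
    (h𝒜int : ∀ A ∈ 𝒜, ∀ A' ∈ 𝒜, A ≠ A' → ((A ∩ A').card : ℤ) ≤ (k : ℤ) - 2)
    (r : Finset B → ℕ)
    (hr𝒜 : ∀ X ∈ 𝒜, r X = k - 1)
    (hr : ∀ X ∉ 𝒜, r X = min X.card k) :
    (∀ X : Finset B, r X ≤ X.card) ∧
    (∀ X Y : Finset B, X ⊆ Y → r X ≤ r Y) ∧
    (∀ X Y : Finset B, r (X ∪ Y) + r (X ∩ Y) ≤ r X + r Y) :=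
  paving_matroid_rank_function_general 𝒜 h𝒜card h𝒜int r hr𝒜 hr
end

section
/- Let B be a basis of 𝔽_q^n, let k ∈ {1, …, n}, and let 𝒜 be a collection of k-element subsets of B with |A ∩ A'| ≤ k − 2 for all distinct A, A' ∈ 𝒜. Set 𝒮 = {⟨A⟩ : A ∈ 𝒜}, the collection of spans of the sets in 𝒜. Then dim(V ∩ W) ≤ k − 2 for all distinct V, W ∈ 𝒮, and the matroid M_{B,𝒜} = (B, r) with r(X) = k − 1 for X ∈ 𝒜 and r(X) = min{|X|, k} otherwise coincides with the matroid induced on B by the q-matroid M_{n,𝔽_q,𝒮} = (𝔽_q^n, ρ), where ρ(V) = k − 1 for V ∈ 𝒮 and ρ(V) = min{dim V, k} otherwise; that is, r(X) = ρ(⟨X⟩) for every X ⊆ B. -/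
/-!
Spans of subsets of a basis behave like the subsets themselves: `⟨s⟩ ⊓ ⟨t⟩ = ⟨s ∩ t⟩`,
`⟨s⟩ = ⟨t⟩` only if `s = t`, and `dim ⟨A⟩ = |A|`. So the intersection bound transfers
from `𝒜` to `𝒮`, and `⟨X⟩ ∈ 𝒮` exactly when `X ∈ 𝒜`, which matches the two cases of `r`
with those of `ρ`.
-/

open Module Submodule

namespace Module.Basis

variable {ι R M : Type*} [Semiring R] [AddCommMonoid M] [Module R M] (b : Basis ι R M)

theorem span_image_inf_span_image (s t : Set ι) :
    span R (b '' s) ⊓ span R (b '' t) = span R (b '' (s ∩ t)) := by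
  ext
  simp only [mem_inf, mem_span_image, Set.subset_inter_iff]

theorem span_image_injective [Nontrivial R] :
    Function.Injective fun s : Set ι ↦ span R (b '' s) := by
  intro s t hst
  ext i
  rw [← b.self_mem_span_image, ← b.self_mem_span_image (s := t)]
  exact SetLike.ext_iff.mp hst (b i)

theorem finrank_span_image_finset [StrongRankCondition R] (s : Finset ι) :
    finrank R (span R (b '' s)) = s.card := by
  have := nontrivial_of_invariantBasisNumber R
  rw [Set.image_eq_range]
  exact (finrank_span_eq_card (b.linearIndependent.comp _ Subtype.val_injective)).trans
    (Fintype.card_coe s)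

end Module.Basis

theorem paving_matroid_eq_induced_matroid_general
    {F : Type} [Field F] {n k : ℕ}
    (B : Basis (Fin n) F (Fin n → F))
    (𝒜 : Set (Finset (Fin n)))
    (h𝒜int : ∀ A ∈ 𝒜, ∀ A' ∈ 𝒜, A ≠ A' → ((A ∩ A').card : ℤ) ≤ (k : ℤ) - 2)
    (𝒮 : Set (Submodule F (Fin n → F)))
    (h𝒮 : 𝒮 = {V | ∃ A ∈ 𝒜, V = Submodule.span F (⇑B '' ↑A)})
    (r : Finset (Fin n) → ℕ)
    (hr𝒜 : ∀ X ∈ 𝒜, r X = k - 1)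
    (hr : ∀ X ∉ 𝒜, r X = min X.card k)
    (ρ : Submodule F (Fin n → F) → ℕ)
    (hρ𝒮 : ∀ V ∈ 𝒮, ρ V = k - 1)
    (hρ : ∀ (V : Submodule F (Fin n → F)), V ∉ 𝒮 → ρ V = min (finrank F V) k) :
    (∀ V ∈ 𝒮, ∀ W ∈ 𝒮, V ≠ W → ((finrank F ↥(V ⊓ W)) : ℤ) ≤ (k : ℤ) - 2) ∧
    (∀ X : Finset (Fin n), r X = ρ (Submodule.span F (⇑B '' ↑X))) := by
  subst h𝒮
  refine ⟨?_, fun X ↦ ?_⟩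
  · rintro _ ⟨A, hA, rfl⟩ _ ⟨A', hA', rfl⟩ hAA'
    rw [B.span_image_inf_span_image, ← Finset.coe_inter, B.finrank_span_image_finset]
    exact h𝒜int A hA A' hA' (ne_of_apply_ne (fun A : Finset (Fin n) ↦ span F (B '' A)) hAA')
  by_cases hX : X ∈ 𝒜
  · rw [hr𝒜 X hX, hρ𝒮 _ ⟨X, hX, rfl⟩]
  · have hspan : span F (B '' X) ∉ {V | ∃ A ∈ 𝒜, V = span F (B '' A)} := by
      rintro ⟨A, hA, hXA⟩
      exact hX ((B.span_image_injective.comp Finset.coe_injective) hXA ▸ hA)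
    rw [hr X hX, hρ _ hspan, B.finrank_span_image_finset]

/-- Let `B` be a basis of `𝔽_q^n` and `𝒜` a collection of `k`-subsets of
`B` with pairwise intersections of size at most `k − 2`; set `𝒮 = {⟨A⟩ : A ∈ 𝒜}`. Then
the spaces in `𝒮` pairwise intersect in dimension at most `k − 2`, and the paving matroid
`M_{B,𝒜}` coincides with the matroid induced on `B` by the `q`-matroid `M_{n,𝔽_q,𝒮}`:
`r(X) = ρ(⟨X⟩)` for every `X ⊆ B`. -/
theorem paving_matroid_eq_induced_matroid
    {F : Type} [Field F] [Fintype F] {n k : ℕ}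
    (hk1 : 1 ≤ k) (hkn : k ≤ n)
    (B : Basis (Fin n) F (Fin n → F))
    (𝒜 : Set (Finset (Fin n)))
    (h𝒜card : ∀ A ∈ 𝒜, A.card = k)
    (h𝒜int : ∀ A ∈ 𝒜, ∀ A' ∈ 𝒜, A ≠ A' → ((A ∩ A').card : ℤ) ≤ (k : ℤ) - 2)
    (𝒮 : Set (Submodule F (Fin n → F)))
    (h𝒮 : 𝒮 = {V | ∃ A ∈ 𝒜, V = Submodule.span F (⇑B '' ↑A)})
    (r : Finset (Fin n) → ℕ)
    (hr𝒜 : ∀ X ∈ 𝒜, r X = k - 1)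
    (hr : ∀ X ∉ 𝒜, r X = min X.card k)
    (ρ : Submodule F (Fin n → F) → ℕ)
    (hρ𝒮 : ∀ V ∈ 𝒮, ρ V = k - 1)
    (hρ : ∀ (V : Submodule F (Fin n → F)), V ∉ 𝒮 → ρ V = min (finrank F V) k) :
    (∀ V ∈ 𝒮, ∀ W ∈ 𝒮, V ≠ W → ((finrank F ↥(V ⊓ W)) : ℤ) ≤ (k : ℤ) - 2) ∧
    (∀ X : Finset (Fin n), r X = ρ (Submodule.span F (⇑B '' ↑X))) :=
  paving_matroid_eq_induced_matroid_general B 𝒜 h𝒜int 𝒮 h𝒮 r hr𝒜 hr ρ hρ𝒮 hρ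
end

section
/- Let 𝔽 = 𝔽_2 and consider the subspaces of 𝔽_2^4: V₀ = ⟨(1,0,0,0),(0,1,0,0)⟩, V₁ = ⟨(0,0,1,0),(0,0,0,1)⟩, V₂ = ⟨(1,0,0,1),(0,1,1,1)⟩, V₃ = ⟨(1,0,1,1),(0,1,1,0)⟩, and set 𝒮 = {V₀,V₁,V₂,V₃}. Let ρ be defined on subspaces of 𝔽_2^4 by ρ(V) = 1 if V ∈ 𝒮 and ρ(V) = min{2, dim V} otherwise, so that (𝔽_2^4, ρ) is a q-matroid. Then for every m ∈ ℕ there is no rank-metric code C ≤ 𝔽_2^{4×m} whose column q-polymatroid is equivalent to (𝔽_2^4, ρ); that is, there is no 𝔽_2-linear subspace C of 𝔽_2^{4×m} and 𝔽_2-linear automorphism α of 𝔽_2^4 with ρ_c(α(V)) = ρ(V) for all subspaces V of 𝔽_2^4. -/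
open Module

/-! The four planes of `𝒮` together with `V₄ = ⟨(1,0,1,0),(0,1,0,1)⟩` form a spread of `𝔽₂⁴`,
and so do the planes `Wᵢ = α(Vᵢ)^⊥`. If `C` represented `ρ`, then `dim C = 2m`, the shortenings
`Aᵢ = C(Wᵢ, c)` would have dimension `m` for `i < 4`, and `A₄ = 0`. As the `Aᵢ` meet pairwise
trivially, `C = A₂ ⊕ A₁ = A₃ ⊕ A₁`. Decomposing `P ∈ A₀` as `Q₂ + R₂ = Q₃ + R₃` accordingly,
the geometry of a spread over `𝔽₂`, applied column by column, puts `P - R₂ - R₃` in `A₄ = 0`;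
hence `P ∈ A₀ ∩ A₁ = 0`, contradicting `dim A₀ = m > 0`. -/

open Function

section DotProduct
variable {F : Type} [Field F] {n : ℕ}

theorem dotPerp_eq_orthogonal (V : Submodule F (Fin n → F)) :
    dotPerp V = LinearMap.BilinForm.orthogonal (dotProductBilin F F) V := rfl

theorem nondegenerate_dotProductBilin :
    LinearMap.BilinForm.Nondegenerate (dotProductBilin F F : LinearMap.BilinForm F (Fin n → F)) :=
  ⟨fun v hv => dotProduct_eq_zero v hv,
    fun w hw => dotProduct_eq_zero w fun v => (dotProduct_comm w v).trans (hw v)⟩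

theorem finrank_dotPerp (V : Submodule F (Fin n → F)) :
    finrank F (dotPerp V) = n - finrank F V := by
  rw [dotPerp_eq_orthogonal,
    LinearMap.BilinForm.finrank_orthogonal nondegenerate_dotProductBilin, finrank_fin_fun]

theorem dotPerp_top : dotPerp (⊤ : Submodule F (Fin n → F)) = ⊥ :=
  LinearMap.BilinForm.orthogonal_top_eq_bot nondegenerate_dotProductBilin

theorem dotPerp_sup (X Y : Submodule F (Fin n → F)) :
    dotPerp (X ⊔ Y) = dotPerp X ⊓ dotPerp Y := by
  refine le_antisymm (le_inf (fun w hw v hv => hw v (Submodule.mem_sup_left hv))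
    (fun w hw v hv => hw v (Submodule.mem_sup_right hv))) ?_
  rintro w ⟨hX, hY⟩ v hv
  obtain ⟨x, hx, y, hy, rfl⟩ := Submodule.mem_sup.mp hv
  rw [add_dotProduct, hX x hx, hY y hy, add_zero]

end DotProduct

section Shortening
variable {F : Type} [Field F] {n m : ℕ}

theorem colspLE_inf (X Y : Submodule F (Fin n → F)) :
    (colspLE (X ⊓ Y) : Submodule F (Matrix (Fin n) (Fin m) F)) = colspLE X ⊓ colspLE Y := by
  ext M
  exact forall_and

theorem colspLE_bot : (colspLE ⊥ : Submodule F (Matrix (Fin n) (Fin m) F)) = ⊥ := by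
  refine eq_bot_iff.mpr fun M hM => (Submodule.mem_bot F).mpr ?_
  ext i j
  simpa [Matrix.mulVec_single] using congrFun ((Submodule.mem_bot F).mp (hM (Pi.single j 1))) i

theorem codeC_le (C : Submodule F (Matrix (Fin n) (Fin m) F)) (V : Submodule F (Fin n → F)) :
    codeC C V ≤ C :=
  inf_le_left

theorem codeC_bot (C : Submodule F (Matrix (Fin n) (Fin m) F)) : codeC C ⊥ = ⊥ := by
  rw [codeC, colspLE_bot, inf_bot_eq]

theorem disjoint_codeC (C : Submodule F (Matrix (Fin n) (Fin m) F))
    {X Y : Submodule F (Fin n → F)} (h : Disjoint X Y) : Disjoint (codeC C X) (codeC C Y) := by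
  rw [disjoint_iff, codeC, codeC, inf_inf_inf_comm, inf_idem, ← colspLE_inf, h.eq_bot,
    ← codeC, codeC_bot]

/-- `rhoC` divides by `m`, so it vanishes identically when `m = 0`. -/
theorem ne_zero_of_rhoC_ne_zero {C : Submodule F (Matrix (Fin n) (Fin m) F)}
    {V : Submodule F (Fin n → F)} (h : rhoC C V ≠ 0) : m ≠ 0 := by
  rintro rfl
  simp [rhoC] at h

theorem finrank_codeC_dotPerp_add_of_rhoC_eq {C : Submodule F (Matrix (Fin n) (Fin m) F)}
    {V : Submodule F (Fin n → F)} {r : ℕ} (hm : m ≠ 0) (h : rhoC C V = r) :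
    finrank F (codeC C (dotPerp V)) + r * m = finrank F C := by
  rw [rhoC, div_eq_iff (Nat.cast_ne_zero.mpr hm)] at h
  exact_mod_cast (by linarith : (finrank F (codeC C (dotPerp V)) : ℚ) + r * m = finrank F C)

end Shortening

theorem Submodule.sup_eq_of_disjoint_of_finrank_add_eq {K V : Type*} [DivisionRing K]
    [AddCommGroup V] [Module K V] {A B C : Submodule K V} [FiniteDimensional K C]
    (hA : A ≤ C) (hB : B ≤ C) (hAB : Disjoint A B)
    (h : finrank K A + finrank K B = finrank K C) : A ⊔ B = C := by
  have : FiniteDimensional K A := Submodule.finiteDimensional_of_le hA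
  have : FiniteDimensional K B := Submodule.finiteDimensional_of_le hB
  refine Submodule.eq_of_le_of_finrank_eq (sup_le hA hB) ?_
  rw [← h, ← Submodule.finrank_sup_add_finrank_inf_eq, hAB.eq_bot, finrank_bot, add_zero]

theorem Submodule.exists_mem_of_pairwise_disjoint {R E ι : Type*} [Ring R] [AddCommGroup E]
    [Module R E] [Finite E] [Fintype ι] {W : ι → Submodule R E} (hW : Pairwise (Disjoint on W))
    (hcard : Nat.card E ≤ 1 + ∑ i, (Nat.card (W i) - 1)) {v : E} (hv : v ≠ 0) :
    ∃ i, v ∈ W i := by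
  classical
  have := Fintype.ofFinite E
  by_contra! hvW
  set t : ι → Finset E := fun i => {x | x ∈ W i ∧ x ≠ 0}
  have ht : ∀ i, (t i).card = Nat.card (W i) - 1 := by
    intro i
    have hfilter : t i = ({x | x ∈ W i} : Finset E).erase 0 := by
      ext x
      simp [t, and_comm]
    rw [hfilter, Finset.card_erase_of_mem (by simp), Nat.card_eq_fintype_card,
      Fintype.card_subtype]
  have hdisj : ((Finset.univ : Finset ι) : Set ι).PairwiseDisjoint t := by
    intro i _ j _ hij
    simp only [onFun, Finset.disjoint_left, t, Finset.mem_filter, Finset.mem_univ, true_and]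
    exact fun x hxi hxj => hxi.2 (Submodule.disjoint_def.mp (hW hij) x hxi.1 hxj.1)
  have hsub : Finset.univ.biUnion t ⊆ (Finset.univ.erase 0).erase v := by
    intro x hx
    simp only [Finset.mem_biUnion, t, Finset.mem_filter, Finset.mem_univ, true_and] at hx
    obtain ⟨i, hxi, hx0⟩ := hx
    simp only [Finset.mem_erase, Finset.mem_univ, and_true]
    exact ⟨fun hxv => hvW i (hxv ▸ hxi), hx0⟩
  have hle := Finset.card_le_card hsub
  rw [Finset.card_biUnion hdisj, Finset.card_erase_of_mem (by simpa using hv),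
    Finset.card_erase_of_mem (Finset.mem_univ _), Finset.card_univ] at hle
  simp only [ht] at hle
  have hE : 1 < Fintype.card E := Fintype.one_lt_card_iff.mpr ⟨v, 0, hv⟩
  rw [Nat.card_eq_fintype_card] at hcard
  omega

/-- With `E = W₀ ⊕ W₁`, the other planes of a spread are graphs of maps `φᵢ : W₀ → W₁`, and over
`𝔽₂` one has `φ₂ + φ₃ + φ₄ = 0`; here `r₂ = φ₂ x` and `r₃ = φ₃ x`. -/
theorem sub_sub_mem_of_spread {E : Type*} [AddCommGroup E] [Module (ZMod 2) E]
    {W : Fin 5 → Submodule (ZMod 2) E} (hW : Pairwise (Disjoint on W))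
    (hcover : ∀ v ≠ 0, ∃ i, v ∈ W i) {x r₂ r₃ : E} (hx : x ∈ W 0) (hr₂ : r₂ ∈ W 1)
    (hr₃ : r₃ ∈ W 1) (h₂ : x - r₂ ∈ W 2) (h₃ : x - r₃ ∈ W 3) : x - r₂ - r₃ ∈ W 4 := by
  have eq_zero : ∀ (i j : Fin 5), i ≠ j → ∀ {z : E}, z ∈ W i → z ∈ W j → z = 0 :=
    fun i j hij z hi hj => Submodule.disjoint_def.mp (hW hij) z hi hj
  set y := x - r₂ - r₃ with hy
  by_cases hy0 : y = 0
  · rw [hy0]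
    exact zero_mem _
  have of_x_eq_zero : x = 0 → y = 0 := by
    rintro rfl
    have hr₂0 : r₂ = 0 := neg_eq_zero.mp <|
      eq_zero 1 2 (by decide) ((W 1).neg_mem hr₂) (by simpa using h₂)
    have hr₃0 : r₃ = 0 := neg_eq_zero.mp <|
      eq_zero 1 3 (by decide) ((W 1).neg_mem hr₃) (by simpa using h₃)
    rw [hy, hr₂0, hr₃0, sub_zero, sub_zero]
  obtain ⟨i, hi⟩ := hcover y hy0
  fin_cases i
  · -- the one place where characteristic 2 enters: `(x - r₂) + (x - r₃) = 2 • x - (r₂ + r₃)`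
    have hs : r₂ + r₃ = 0 := by
      refine eq_zero 0 1 (by decide) ?_ ((W 1).add_mem hr₂ hr₃)
      convert (W 0).sub_mem hx hi using 1
      rw [hy]
      abel
    have hq : x - r₂ = -(x - r₃) := by
      rw [eq_neg_iff_add_eq_zero]
      calc x - r₂ + (x - r₃) = (x + x) - (r₂ + r₃) := by abel
        _ = 0 := by rw [ZModModule.add_self, hs, sub_zero]
    have hq0 : x - r₂ = 0 := eq_zero 2 3 (by decide) h₂ (hq ▸ (W 3).neg_mem h₃)
    refine absurd (eq_zero 0 1 (by decide) hi ?_) hy0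
    rw [hy, hq0, zero_sub]
    exact (W 1).neg_mem hr₃
  · refine absurd (of_x_eq_zero (eq_zero 0 1 (by decide) hx ?_)) hy0
    convert (W 1).add_mem hi ((W 1).add_mem hr₂ hr₃) using 1
    rw [hy]
    abel
  · have hr₃0 : r₃ = 0 := by
      refine eq_zero 1 2 (by decide) hr₃ ?_
      convert (W 2).sub_mem h₂ hi using 1
      rw [hy]
      abel
    refine absurd (of_x_eq_zero (eq_zero 0 3 (by decide) hx ?_)) hy0
    simpa [hr₃0] using h₃
  · have hr₂0 : r₂ = 0 := by
      refine eq_zero 1 3 (by decide) hr₂ ?_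
      convert (W 3).sub_mem h₃ hi using 1
      rw [hy]
      abel
    refine absurd (of_x_eq_zero (eq_zero 0 2 (by decide) hx ?_)) hy0
    simpa [hr₂0] using h₂
  · exact hi

theorem codeC_eq_bot_of_spread {n m : ℕ}
    {C : Submodule (ZMod 2) (Matrix (Fin n) (Fin m) (ZMod 2))}
    {W : Fin 5 → Submodule (ZMod 2) (Fin n → ZMod 2)} (hW : Pairwise (Disjoint on W))
    (hcover : ∀ v ≠ 0, ∃ i, v ∈ W i) (h₂ : codeC C (W 2) ⊔ codeC C (W 1) = C)
    (h₃ : codeC C (W 3) ⊔ codeC C (W 1) = C) (h₄ : codeC C (W 4) = ⊥) :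
    codeC C (W 0) = ⊥ := by
  refine eq_bot_iff.mpr fun P hP => ?_
  obtain ⟨Q₂, hQ₂, R₂, hR₂, rfl⟩ := Submodule.mem_sup.mp (h₂ ▸ hP.1)
  obtain ⟨Q₃, hQ₃, R₃, hR₃, hP₃⟩ := Submodule.mem_sup.mp (h₃ ▸ hP.1)
  have hN : Q₂ + R₂ - R₂ - R₃ ∈ codeC C (W 4) := by
    refine ⟨C.sub_mem (C.sub_mem hP.1 hR₂.1) hR₃.1, fun v => ?_⟩
    rw [Matrix.sub_mulVec, Matrix.sub_mulVec]
    refine sub_sub_mem_of_spread hW hcover (hP.2 v) (hR₂.2 v) (hR₃.2 v) ?_ ?_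
    · rw [← Matrix.sub_mulVec, add_sub_cancel_right]
      exact hQ₂.2 v
    · rw [← Matrix.sub_mulVec, ← hP₃, add_sub_cancel_right]
      exact hQ₃.2 v
  rw [h₄, Submodule.mem_bot, sub_sub, sub_eq_zero] at hN
  exact Submodule.disjoint_def.mp (disjoint_codeC C (hW (by decide : (0 : Fin 5) ≠ 1))) _ hP
    (hN ▸ (codeC C (W 1)).add_mem hR₂ hR₃)

theorem eq_zero_of_finrank_codeC_spread {n m : ℕ}
    {C : Submodule (ZMod 2) (Matrix (Fin n) (Fin m) (ZMod 2))}
    {W : Fin 5 → Submodule (ZMod 2) (Fin n → ZMod 2)} (hW : Pairwise (Disjoint on W))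
    (hcover : ∀ v ≠ 0, ∃ i, v ∈ W i) (hC : finrank (ZMod 2) C = 2 * m)
    (hA : ∀ i ≠ 4, finrank (ZMod 2) (codeC C (W i)) = m) (hA₄ : codeC C (W 4) = ⊥) :
    m = 0 := by
  have hsup : ∀ i ≠ 4, i ≠ 1 → codeC C (W i) ⊔ codeC C (W 1) = C := fun i hi hi₁ =>
    Submodule.sup_eq_of_disjoint_of_finrank_add_eq (codeC_le _ _) (codeC_le _ _)
      (disjoint_codeC C (hW hi₁)) (by rw [hA i hi, hA 1 (by decide), hC, two_mul])
  have hA₀ := codeC_eq_bot_of_spread hW hcover (hsup 2 (by decide) (by decide))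
    (hsup 3 (by decide) (by decide)) hA₄
  rw [← hA 0 (by decide), hA₀, finrank_bot]

/-- Rows `0`–`3` span the planes of `𝒮`; row `4` spans the plane completing them to a spread. -/
def spreadGen : Fin 5 → Fin 2 → Fin 4 → ZMod 2 :=
  ![![![1,0,0,0], ![0,1,0,0]], ![![0,0,1,0], ![0,0,0,1]], ![![1,0,0,1], ![0,1,1,1]],
    ![![1,0,1,1], ![0,1,1,0]], ![![1,0,1,0], ![0,1,0,1]]]

def spreadPlane (i : Fin 5) : Submodule (ZMod 2) (Fin 4 → ZMod 2) :=
  Submodule.span (ZMod 2) {spreadGen i 0, spreadGen i 1}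

theorem pairwise_disjoint_spreadPlane : Pairwise (Disjoint on spreadPlane) := by
  intro i j hij
  rw [onFun, Submodule.disjoint_def]
  intro v hvi hvj
  obtain ⟨a, b, rfl⟩ := Submodule.mem_span_pair.mp hvi
  obtain ⟨c, d, h⟩ := Submodule.mem_span_pair.mp hvj
  clear hvi hvj
  revert a b c d
  fin_cases i <;> fin_cases j <;> first | exact absurd rfl hij | decide

theorem finrank_spreadPlane (i : Fin 5) : finrank (ZMod 2) (spreadPlane i) = 2 := by
  rw [spreadPlane, ← Matrix.range_cons_cons_empty _ _ ![], finrank_span_eq_card]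
  · simp
  rw [LinearIndependent.pair_iff]
  fin_cases i <;> decide

theorem spreadPlane_sup_eq_top {i j : Fin 5} (hij : i ≠ j) : spreadPlane i ⊔ spreadPlane j = ⊤ :=
  Submodule.eq_top_of_disjoint _ _ (by simp [finrank_spreadPlane])
    (pairwise_disjoint_spreadPlane hij)

theorem spreadPlane_injective : Injective spreadPlane := by
  intro i j h
  by_contra hij
  have := finrank_spreadPlane i
  rw [(pairwise_disjoint_spreadPlane hij).eq_bot_of_le h.le, finrank_bot] at this
  exact absurd this (by decide)

theorem spreadPlane_ne_top (i : Fin 5) : spreadPlane i ≠ ⊤ := by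
  intro h
  have := finrank_spreadPlane i
  rw [h, finrank_top] at this
  simp at this

section DualSpread
variable (α : (Fin 4 → ZMod 2) ≃ₗ[ZMod 2] (Fin 4 → ZMod 2))

theorem pairwise_disjoint_dotPerp_map_spreadPlane :
    Pairwise (Disjoint on fun i => dotPerp ((spreadPlane i).map α.toLinearMap)) := by
  intro i j hij
  rw [onFun, disjoint_iff, ← dotPerp_sup, ← Submodule.map_sup, spreadPlane_sup_eq_top hij,
    Submodule.map_top, LinearEquiv.range, dotPerp_top]

theorem finrank_dotPerp_map_spreadPlane (i : Fin 5) :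
    finrank (ZMod 2) (dotPerp ((spreadPlane i).map α.toLinearMap)) = 2 := by
  rw [finrank_dotPerp, LinearEquiv.finrank_map_eq, finrank_spreadPlane]

theorem exists_mem_dotPerp_map_spreadPlane {v : Fin 4 → ZMod 2} (hv : v ≠ 0) :
    ∃ i, v ∈ dotPerp ((spreadPlane i).map α.toLinearMap) := by
  refine Submodule.exists_mem_of_pairwise_disjoint
    (pairwise_disjoint_dotPerp_map_spreadPlane α) ?_ hv
  have hcard : ∀ (U : Submodule (ZMod 2) (Fin 4 → ZMod 2)), Nat.card U = 2 ^ finrank (ZMod 2) U :=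
    fun U => by rw [Module.natCard_eq_pow_finrank (K := ZMod 2), Nat.card_zmod]
  rw [Module.natCard_eq_pow_finrank (K := ZMod 2), Nat.card_zmod, finrank_fin_fun]
  simp only [hcard, finrank_dotPerp_map_spreadPlane]
  simp

end DualSpread

/-- The `q`-matroid on `𝔽_2^4` determined by the partial spread
`𝒮 = {V₀, V₁, V₂, V₃}` (with `ρ(V) = 1` on `𝒮` and `ρ(V) = min{2, dim V}` otherwise) is
not representable by any rank-metric code `C ≤ 𝔽_2^{4×m}`: for every `m` there is no
code `C` and automorphism `α` of `𝔽_2^4` with `ρ_c(α(V)) = ρ(V)` for all `V`. -/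
theorem nonrepresentable_qMatroid
    (𝒮 : Set (Submodule (ZMod 2) (Fin 4 → ZMod 2)))
    (h𝒮 : 𝒮 = {Submodule.span (ZMod 2) {![1,0,0,0], ![0,1,0,0]},
               Submodule.span (ZMod 2) {![0,0,1,0], ![0,0,0,1]},
               Submodule.span (ZMod 2) {![1,0,0,1], ![0,1,1,1]},
               Submodule.span (ZMod 2) {![1,0,1,1], ![0,1,1,0]}})
    (ρ : Submodule (ZMod 2) (Fin 4 → ZMod 2) → ℕ)
    (hρ𝒮 : ∀ V ∈ 𝒮, ρ V = 1)
    (hρ : ∀ (V : Submodule (ZMod 2) (Fin 4 → ZMod 2)), V ∉ 𝒮 →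
      ρ V = min 2 (finrank (ZMod 2) V)) :
    ∀ m : ℕ, ¬ ∃ (C : Submodule (ZMod 2) (Matrix (Fin 4) (Fin m) (ZMod 2)))
      (α : (Fin 4 → ZMod 2) ≃ₗ[ZMod 2] (Fin 4 → ZMod 2)),
      ∀ V : Submodule (ZMod 2) (Fin 4 → ZMod 2),
        rhoC C (Submodule.map (α : (Fin 4 → ZMod 2) →ₗ[ZMod 2] (Fin 4 → ZMod 2)) V)
          = (ρ V : ℚ) := by
  rintro m ⟨C, α, hC⟩
  have h𝒮' : 𝒮 = {spreadPlane 0, spreadPlane 1, spreadPlane 2, spreadPlane 3} := h𝒮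
  have hρV : ∀ i ≠ 4, ρ (spreadPlane i) = 1 := by
    intro i hi
    refine hρ𝒮 _ ?_
    fin_cases i <;> simp [h𝒮'] at hi ⊢
  have hρ₄ : ρ (spreadPlane 4) = 2 := by
    rw [hρ _ (by simp [h𝒮', spreadPlane_injective.eq_iff]), finrank_spreadPlane, min_self]
  have hρtop : ρ ⊤ = 2 := by
    rw [hρ _ (by simp [h𝒮', (spreadPlane_ne_top _).symm]), finrank_top, finrank_fin_fun]
    rfl
  set W := fun i => dotPerp ((spreadPlane i).map α.toLinearMap)
  have hCtop : rhoC C ⊤ = (2 : ℕ) := by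
    simpa only [Submodule.map_top, LinearEquiv.range, hρtop] using hC ⊤
  have hm : m ≠ 0 := ne_zero_of_rhoC_ne_zero (V := ⊤) (by rw [hCtop]; norm_num)
  have hdimC := finrank_codeC_dotPerp_add_of_rhoC_eq hm hCtop
  rw [dotPerp_top, codeC_bot, finrank_bot, zero_add] at hdimC
  have hdimA : ∀ i ≠ 4, finrank (ZMod 2) (codeC C (W i)) = m := fun i hi => by
    have : finrank (ZMod 2) (codeC C (W i)) + 1 * m = finrank (ZMod 2) C :=
      finrank_codeC_dotPerp_add_of_rhoC_eq hm ((hC _).trans (congrArg _ (hρV i hi)))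
    omega
  have hA₄ : codeC C (W 4) = ⊥ := by
    have : finrank (ZMod 2) (codeC C (W 4)) + 2 * m = finrank (ZMod 2) C :=
      finrank_codeC_dotPerp_add_of_rhoC_eq hm ((hC _).trans (congrArg _ hρ₄))
    exact Submodule.finrank_eq_zero.mp (by omega)
  exact hm (eq_zero_of_finrank_codeC_spread (pairwise_disjoint_dotPerp_map_spreadPlane α)
    (fun _ => exists_mem_dotPerp_map_spreadPlane α) hdimC.symm hdimA hA₄)
end

section
/- Let (E, ρ) be a q-polymatroid over a finite field 𝔽_q, let X be a subspace of E, and let π: E → E/X be the canonical projection. Define ρ_{E/X}(V) = ρ(π⁻¹(V)) − ρ(X) for every subspace V of E/X. Then ρ_{E/X} is a q-rank function on E/X; in particular it takes values in ℚ≥0 and (E/X, ρ_{E/X}) is a q-polymatroid (the contraction of X from (E, ρ)). -/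
/-! Monotonicity and submodularity of `ρ_{E/X}` are those of `ρ`, since `V ↦ π⁻¹(V)` is a
lattice embedding onto the subspaces containing `X`. For the bound (R1), write `π⁻¹(V) = X ⊕ U`;
then submodularity of `ρ` on `X, U` together with (R1) for `U` gives
`ρ(π⁻¹(V)) - ρ(X) ≤ dim U = dim V`. -/

open Module

namespace Submodule

variable {K V : Type*} [DivisionRing K] [AddCommGroup V] [Module K V]

theorem comap_mkQ_sup (X : Submodule K V) (A B : Submodule K (V ⧸ X)) :
    (A ⊔ B).comap X.mkQ = A.comap X.mkQ ⊔ B.comap X.mkQ :=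
  congrArg Subtype.val ((comapMkQRelIso X).map_sup A B)

theorem finrank_comap_mkQ [FiniteDimensional K V] (X : Submodule K V) (A : Submodule K (V ⧸ X)) :
    finrank K (A.comap X.mkQ) = finrank K X + finrank K A := by
  have h := LinearMap.finrank_range_add_finrank_ker (X.mkQ.domRestrict (A.comap X.mkQ))
  rw [LinearMap.range_domRestrict, map_comap_eq_of_surjective X.mkQ_surjective,
    LinearMap.ker_domRestrict, ker_mkQ, (comapSubtypeEquivOfLe (le_comap_mkQ X A)).finrank_eq] at h
  omega

end Submodule

open Submodule

section

variable {K V : Type*} [DivisionRing K] [AddCommGroup V] [Module K V] (ρ : Submodule K V → ℚ)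

theorem rank_add_finrank_le_of_le [FiniteDimensional K V] (h0 : 0 ≤ ρ ⊥)
    (hR1 : ∀ A : Submodule K V, ρ A ≤ finrank K A)
    (hR3 : ∀ A B : Submodule K V, ρ (A ⊔ B) + ρ (A ⊓ B) ≤ ρ A + ρ B)
    {X C : Submodule K V} (hXC : X ≤ C) :
    ρ C + finrank K X ≤ ρ X + finrank K C := by
  obtain ⟨U, hU⟩ := Submodule.exists_isCompl X
  have hsup : X ⊔ U ⊓ C = C := by
    rw [← sup_inf_assoc_of_le U hXC, hU.sup_eq_top, top_inf_eq]
  have hinf : X ⊓ (U ⊓ C) = ⊥ := (hU.disjoint.mono_right inf_le_left).eq_bot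
  have hdim := finrank_sup_add_finrank_inf_eq X (U ⊓ C)
  rw [hsup, hinf, finrank_bot, add_zero] at hdim
  have hsub := hR3 X (U ⊓ C)
  rw [hsup, hinf] at hsub
  calc ρ C + finrank K X ≤ ρ X + ρ (U ⊓ C) + finrank K X := by linarith
    _ ≤ ρ X + finrank K ↥(U ⊓ C) + finrank K X := by linarith [hR1 (U ⊓ C)]
    _ = ρ X + finrank K C := by rw [hdim]; push_cast; ring

def contractRank (X : Submodule K V) (A : Submodule K (V ⧸ X)) : ℚ :=
  ρ (A.comap X.mkQ) - ρ X

namespace contractRank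

variable {ρ} {X : Submodule K V}

theorem nonneg (hR2 : Monotone ρ) (A : Submodule K (V ⧸ X)) : 0 ≤ contractRank ρ X A :=
  sub_nonneg.2 (hR2 (le_comap_mkQ X A))

theorem mono (hR2 : Monotone ρ) : Monotone (contractRank ρ X) :=
  fun _ _ hAB => sub_le_sub_right (hR2 (comap_mono hAB)) _

theorem le_finrank [FiniteDimensional K V] (h0 : 0 ≤ ρ ⊥)
    (hR1 : ∀ A : Submodule K V, ρ A ≤ finrank K A)
    (hR3 : ∀ A B : Submodule K V, ρ (A ⊔ B) + ρ (A ⊓ B) ≤ ρ A + ρ B)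
    (A : Submodule K (V ⧸ X)) : contractRank ρ X A ≤ finrank K A := by
  have h := rank_add_finrank_le_of_le ρ h0 hR1 hR3 (le_comap_mkQ X A)
  rw [finrank_comap_mkQ, Nat.cast_add] at h
  unfold contractRank
  linarith

theorem submodular (hR3 : ∀ A B : Submodule K V, ρ (A ⊔ B) + ρ (A ⊓ B) ≤ ρ A + ρ B)
    (A B : Submodule K (V ⧸ X)) :
    contractRank ρ X (A ⊔ B) + contractRank ρ X (A ⊓ B) ≤
      contractRank ρ X A + contractRank ρ X B := by
  have h := hR3 (A.comap X.mkQ) (B.comap X.mkQ)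
  rw [← comap_mkQ_sup, ← comap_inf] at h
  unfold contractRank
  linarith

end contractRank

end

theorem contraction_is_qPolymatroid_general
    {F E : Type} [Field F] [AddCommGroup E] [Module F E]
    [FiniteDimensional F E]
    (ρ : Submodule F E → ℚ)
    (hnonneg : ∀ V : Submodule F E, 0 ≤ ρ V)
    (hR1 : ∀ V : Submodule F E, ρ V ≤ finrank F V)
    (hR2 : ∀ V W : Submodule F E, V ≤ W → ρ V ≤ ρ W)
    (hR3 : ∀ V W : Submodule F E, ρ (V ⊔ W) + ρ (V ⊓ W) ≤ ρ V + ρ W)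
    (X : Submodule F E)
    (ρq : Submodule F (E ⧸ X) → ℚ)
    (hρq : ∀ V : Submodule F (E ⧸ X), ρq V = ρ (V.comap X.mkQ) - ρ X) :
    (∀ V : Submodule F (E ⧸ X), 0 ≤ ρq V) ∧
    (∀ V : Submodule F (E ⧸ X), ρq V ≤ finrank F V) ∧
    (∀ V W : Submodule F (E ⧸ X), V ≤ W → ρq V ≤ ρq W) ∧
    (∀ V W : Submodule F (E ⧸ X), ρq (V ⊔ W) + ρq (V ⊓ W) ≤ ρq V + ρq W) := by
  obtain rfl : ρq = contractRank ρ X := funext hρq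
  have hmono : Monotone ρ := fun V W => hR2 V W
  exact ⟨contractRank.nonneg hmono, contractRank.le_finrank (hnonneg ⊥) hR1 hR3,
    fun _ _ hVW => contractRank.mono hmono hVW, contractRank.submodular hR3⟩

/-- Let `(E, ρ)` be a `q`-polymatroid and `X ≤ E`. Then
`ρ_{E/X}(V) = ρ(π⁻¹(V)) − ρ(X)` is a `q`-rank function on `E/X`, so the contraction
`(E/X, ρ_{E/X})` is a `q`-polymatroid. -/
theorem contraction_is_qPolymatroid
    {F E : Type} [Field F] [Fintype F] [AddCommGroup E] [Module F E]
    [FiniteDimensional F E]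
    (ρ : Submodule F E → ℚ)
    (hnonneg : ∀ V : Submodule F E, 0 ≤ ρ V)
    (hR1 : ∀ V : Submodule F E, ρ V ≤ finrank F V)
    (hR2 : ∀ V W : Submodule F E, V ≤ W → ρ V ≤ ρ W)
    (hR3 : ∀ V W : Submodule F E, ρ (V ⊔ W) + ρ (V ⊓ W) ≤ ρ V + ρ W)
    (X : Submodule F E)
    (ρq : Submodule F (E ⧸ X) → ℚ)
    (hρq : ∀ V : Submodule F (E ⧸ X), ρq V = ρ (V.comap X.mkQ) - ρ X) :
    (∀ V : Submodule F (E ⧸ X), 0 ≤ ρq V) ∧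
    (∀ V : Submodule F (E ⧸ X), ρq V ≤ finrank F V) ∧
    (∀ V W : Submodule F (E ⧸ X), V ≤ W → ρq V ≤ ρq W) ∧
    (∀ V W : Submodule F (E ⧸ X), ρq (V ⊔ W) + ρq (V ⊓ W) ≤ ρq V + ρq W) :=
  contraction_is_qPolymatroid_general ρ hnonneg hR1 hR2 hR3 X ρq hρq
end

section
/- Let (E, ρ) be a q-polymatroid over a finite field 𝔽_q and X ≤ E a subspace. Choose a complement Y of X (so X ⊕ Y = E), nondegenerate symmetric bilinear forms ⟨·,·⟩_X on X and ⟨·,·⟩_Y on Y, and let ⟨·,·⟩ be their orthogonal sum, a nondegenerate symmetric bilinear form on E with X^⊥ = Y. Let ρ* be the dual rank function of ρ on E with respect to ⟨·,·⟩, let ρ_{E/X}* denote the rank function of the contraction of X from (E, ρ*), i.e., (ρ*)_{E/X}(V) = ρ*(π⁻¹(V)) − ρ*(X) for V ≤ E/X, and let (ρ|_Y)* be the dual with respect to ⟨·,·⟩_Y of the restriction of ρ to Y. Let ξ: E/X → Y be the isomorphism sending v + X to the Y-component of v. Then (ρ*)_{E/X}(V) = (ρ|_Y)*(ξ(V)) for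 all subspaces V of E/X; in particular the dual of the deletion (M\X) is equivalent to the contraction M*/X of the dual. -/
/-! Writing `W = ξ(V) ≤ Y`, the preimage of `V` in `E` is `X ⊕ W`, so its dimension is
`dim X + dim W`, and its orthogonal is `X^⊥ ∩ W^⊥ = Y ∩ W^⊥`. Substituting into the definition
of `ρ*`, the terms `dim X` and `ρ(E)` cancel against `ρ*(X) = dim X + ρ(Y) - ρ(E)`. -/

open Module

namespace LinearMap.BilinForm

variable {R M : Type*} [CommRing R] [AddCommGroup M] [Module R M] {B : LinearMap.BilinForm R M}

theorem orthogonal_sup_s13 (P Q : Submodule R M) :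
    B.orthogonal (P ⊔ Q) = B.orthogonal P ⊓ B.orthogonal Q := by
  refine le_antisymm (le_inf (orthogonal_le le_sup_left) (orthogonal_le le_sup_right)) ?_
  rintro m ⟨hP, hQ⟩ n hn
  obtain ⟨p, hp, q, hq, rfl⟩ := Submodule.mem_sup.mp hn
  rw [map_add, LinearMap.add_apply, hP p hp, hQ q hq, add_zero]

theorem orthogonal_eq_of_isCompl (hB : B.IsRefl) {X Y : Submodule R M} (hXY : IsCompl X Y)
    (horth : ∀ x ∈ X, ∀ y ∈ Y, B x y = 0)
    (hndX : ∀ x ∈ X, (∀ x' ∈ X, B x x' = 0) → x = 0) :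
    B.orthogonal X = Y := by
  have hdisj : Disjoint X (B.orthogonal X) := Submodule.disjoint_def.mpr
    fun x hx hxX ↦ hndX x hx fun x' hx' ↦ hB _ _ (hxX x' hx')
  exact ((le_iff_eq_of_codisjoint_of_disjoint hXY.codisjoint.symm hdisj).mp
    fun y hy x hx ↦ horth x hx y hy).symm

end LinearMap.BilinForm

namespace Submodule

variable {R M : Type*} [Ring R] [AddCommGroup M] [Module R M]

theorem comap_mkQ_eq_sup_map_quotientEquivOfIsCompl {p q : Submodule R M} (h : IsCompl p q)
    (V : Submodule R (M ⧸ p)) :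
    V.comap p.mkQ = p ⊔ V.map (q.subtype ∘ₗ (p.quotientEquivOfIsCompl q h : (M ⧸ p) →ₗ[R] q)) := by
  have hsection :
      p.mkQ ∘ₗ q.subtype ∘ₗ (p.quotientEquivOfIsCompl q h : (M ⧸ p) →ₗ[R] q) = LinearMap.id :=
    LinearMap.ext (mk_quotientEquivOfIsCompl_apply h)
  conv_lhs => rw [← V.map_id, ← hsection, map_comp]
  rw [comap_map_eq, ker_mkQ, sup_comm]

theorem finrank_sup_of_disjoint {K V : Type*} [DivisionRing K] [AddCommGroup V] [Module K V]
    {s t : Submodule K V} [FiniteDimensional K s] [FiniteDimensional K t] (h : Disjoint s t) :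
    finrank K ↥(s ⊔ t) = finrank K s + finrank K t := by
  rw [← finrank_sup_add_finrank_inf_eq, h.eq_bot, finrank_bot, add_zero]

end Submodule

theorem contraction_of_dual_eq_dual_of_deletion_general
    {F E : Type} [Field F] [AddCommGroup E] [Module F E]
    [FiniteDimensional F E]
    (ρ : Submodule F E → ℚ)
    (X Y : Submodule F E) (hXY : IsCompl X Y)
    (B : E →ₗ[F] E →ₗ[F] F)
    (hsymm : ∀ x y : E, B x y = B y x)
    (horth : ∀ x ∈ X, ∀ y ∈ Y, B x y = 0)
    (hndX : ∀ x ∈ X, (∀ x' ∈ X, B x x' = 0) → x = 0)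
    (ρd : Submodule F E → ℚ)
    (hρd : ∀ V : Submodule F E,
      ρd V = (finrank F V : ℚ) + ρ (LinearMap.BilinForm.orthogonal B V) - ρ ⊤)
    (ξ : (E ⧸ X) ≃ₗ[F] Y)
    (hξ : ξ = Submodule.quotientEquivOfIsCompl X Y hXY) :
    ∀ V : Submodule F (E ⧸ X),
      ρd (V.comap X.mkQ) - ρd X =
        (finrank F (Submodule.map (Y.subtype ∘ₗ (ξ : (E ⧸ X) →ₗ[F] Y)) V) : ℚ)
          + ρ (Y ⊓ LinearMap.BilinForm.orthogonal B
              (Submodule.map (Y.subtype ∘ₗ (ξ : (E ⧸ X) →ₗ[F] Y)) V))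
          - ρ Y := by
  intro V
  subst hξ
  set W := V.map (Y.subtype ∘ₗ (X.quotientEquivOfIsCompl Y hXY : (E ⧸ X) →ₗ[F] Y))
  have hWY : W ≤ Y := by
    rintro _ ⟨v, -, rfl⟩
    exact (X.quotientEquivOfIsCompl Y hXY v).2
  have hXorth : LinearMap.BilinForm.orthogonal B X = Y :=
    LinearMap.BilinForm.orthogonal_eq_of_isCompl (fun x y h ↦ (hsymm y x).trans h) hXY horth hndX
  rw [hρd, hρd, Submodule.comap_mkQ_eq_sup_map_quotientEquivOfIsCompl hXY,
    Submodule.finrank_sup_of_disjoint (hXY.disjoint.mono_right hWY),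
    LinearMap.BilinForm.orthogonal_sup_s13, hXorth]
  push_cast
  ring

/-- Let `(E, ρ)` be a `q`-polymatroid, `X ⊕ Y = E`, and let `B` be the
orthogonal sum of nondegenerate symmetric bilinear forms on `X` and on `Y` (so `B` is a
nondegenerate symmetric bilinear form on `E` with `X^⊥ = Y`). With `ρ*` the dual of `ρ`
w.r.t. `B`, and `ξ : E/X → Y` the canonical isomorphism, the contraction of `X` from
`(E, ρ*)` equals, via `ξ`, the dual (w.r.t. the restriction of `B` to `Y`) of the
restriction of `ρ` to `Y`:
`(ρ*)_{E/X}(V) = (ρ|_Y)*(ξ(V))` for all `V ≤ E/X`. In particular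
`(M \ X)* ≈ M*/X`. -/
theorem contraction_of_dual_eq_dual_of_deletion
    {F E : Type} [Field F] [Fintype F] [AddCommGroup E] [Module F E]
    [FiniteDimensional F E]
    (ρ : Submodule F E → ℚ)
    (hnonneg : ∀ V : Submodule F E, 0 ≤ ρ V)
    (hR1 : ∀ V : Submodule F E, ρ V ≤ finrank F V)
    (hR2 : ∀ V W : Submodule F E, V ≤ W → ρ V ≤ ρ W)
    (hR3 : ∀ V W : Submodule F E, ρ (V ⊔ W) + ρ (V ⊓ W) ≤ ρ V + ρ W)
    (X Y : Submodule F E) (hXY : IsCompl X Y)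
    (B : E →ₗ[F] E →ₗ[F] F)
    (hsymm : ∀ x y : E, B x y = B y x)
    (horth : ∀ x ∈ X, ∀ y ∈ Y, B x y = 0)
    (hndX : ∀ x ∈ X, (∀ x' ∈ X, B x x' = 0) → x = 0)
    (hndY : ∀ y ∈ Y, (∀ y' ∈ Y, B y y' = 0) → y = 0)
    (ρd : Submodule F E → ℚ)
    (hρd : ∀ V : Submodule F E,
      ρd V = (finrank F V : ℚ) + ρ (LinearMap.BilinForm.orthogonal B V) - ρ ⊤)
    (ξ : (E ⧸ X) ≃ₗ[F] Y)
    (hξ : ξ = Submodule.quotientEquivOfIsCompl X Y hXY) :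
    ∀ V : Submodule F (E ⧸ X),
      ρd (V.comap X.mkQ) - ρd X =
        (finrank F (Submodule.map (Y.subtype ∘ₗ (ξ : (E ⧸ X) →ₗ[F] Y)) V) : ℚ)
          + ρ (Y ⊓ LinearMap.BilinForm.orthogonal B
              (Submodule.map (Y.subtype ∘ₗ (ξ : (E ⧸ X) →ₗ[F] Y)) V))
          - ρ Y :=
  contraction_of_dual_eq_dual_of_deletion_general ρ X Y hXY B hsymm horth hndX ρd hρd ξ hξ
end

section
/- Let (E, ρ) be a q-polymatroid over a finite field 𝔽_q with closure operator cl. Then for all subspaces V, W of E: (CL1) V ≤ cl(V); (CL2) if V ≤ W then cl(V) ≤ cl(W); (CL3) cl(cl(V)) = cl(V). -/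
open Module

/-!
Call `X` absorbed by `V` when `ρ (V ⊔ X) = ρ V`. Submodularity shows that anything absorbed by `V`
is absorbed by every `W ≥ V`; this gives (CL2), and also that the spaces absorbed by `V` are closed
under `⊔`. The lattice of subspaces is Noetherian, so the supremum `cl V` of absorbed spaces is
itself absorbed, i.e. `ρ (cl V) = ρ V`, and (CL3) follows. (CL1) holds because `V` is the sum of
the lines it contains, all of which it absorbs.
-/

section RankClosure

variable {α β : Type*}

def rankClosure [CompleteLattice α] (P : α → Prop) (ρ : α → β) (V : α) : α :=
  sSup {X | P X ∧ ρ (V ⊔ X) = ρ V}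

section Lattice

variable [AddCommGroup β] [PartialOrder β] [IsOrderedAddMonoid β] [Lattice α]
  {ρ : α → β} (hmono : Monotone ρ) (hsub : ∀ V W, ρ (V ⊔ W) + ρ (V ⊓ W) ≤ ρ V + ρ W)
include hmono hsub

theorem rank_sup_eq_of_le {V W X : α} (hVW : V ≤ W) (hX : ρ (V ⊔ X) = ρ V) :
    ρ (W ⊔ X) = ρ W := by
  have hsum : ρ (W ⊔ X) + ρ V ≤ ρ W + ρ V :=
    calc ρ (W ⊔ X) + ρ V
        ≤ ρ (W ⊔ (V ⊔ X)) + ρ (W ⊓ (V ⊔ X)) := by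
          rw [← sup_assoc, sup_eq_left.mpr hVW]
          exact add_le_add_right (hmono (le_inf hVW le_sup_left)) _
      _ ≤ ρ W + ρ V := hX ▸ hsub W (V ⊔ X)
  exact le_antisymm (le_of_add_le_add_right hsum) (hmono le_sup_left)

theorem supClosed_setOf_rank_sup_eq (V : α) : SupClosed {X | ρ (V ⊔ X) = ρ V} := by
  intro X hX Y hY
  change ρ (V ⊔ (X ⊔ Y)) = ρ V
  rw [← sup_assoc, rank_sup_eq_of_le hmono hsub le_sup_left hY, hX]

end Lattice

section CompleteLattice

variable [AddCommGroup β] [PartialOrder β] [IsOrderedAddMonoid β] [CompleteLattice α]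
  {ρ : α → β} (hmono : Monotone ρ) (hsub : ∀ V W, ρ (V ⊔ W) + ρ (V ⊓ W) ≤ ρ V + ρ W)
include hmono hsub

theorem rankClosure_mono (P : α → Prop) : Monotone (rankClosure P ρ) := fun _ _ hVW =>
  sSup_le_sSup fun _ ⟨hP, hX⟩ => ⟨hP, rank_sup_eq_of_le hmono hsub hVW hX⟩

variable [WellFoundedGT α]

theorem rank_sup_sSup_eq {V : α} {S : Set α} (hS : ∀ X ∈ S, ρ (V ⊔ X) = ρ V) :
    ρ (V ⊔ sSup S) = ρ V := by
  set T := {X | ρ (V ⊔ X) = ρ V}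
  have hT : sSup T ∈ T :=
    CompleteLattice.IsSupFiniteCompact.isSupClosedCompact α
      (CompleteLattice.WellFoundedGT.isSupFiniteCompact α) T ⟨⊥, by simp [T]⟩
      (supClosed_setOf_rank_sup_eq hmono hsub V)
  refine le_antisymm ?_ (hmono le_sup_left)
  calc ρ (V ⊔ sSup S) ≤ ρ (V ⊔ sSup T) := hmono (sup_le_sup_left (sSup_le_sSup hS) V)
    _ = ρ V := hT

theorem rank_rankClosure {P : α → Prop} {V : α} (hV : V ≤ rankClosure P ρ V) :
    ρ (rankClosure P ρ V) = ρ V := by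
  rw [← sup_eq_right.mpr hV]
  exact rank_sup_sSup_eq hmono hsub fun _ hX => hX.2

theorem rankClosure_idem {P : α → Prop} (hext : ∀ V, V ≤ rankClosure P ρ V) (V : α) :
    rankClosure P ρ (rankClosure P ρ V) = rankClosure P ρ V := by
  refine le_antisymm (sSup_le fun X ⟨hP, hX⟩ => le_sSup ⟨hP, ?_⟩) (hext _)
  refine le_antisymm ?_ (hmono le_sup_left)
  calc ρ (V ⊔ X) ≤ ρ (rankClosure P ρ V ⊔ X) := hmono (sup_le_sup_right (hext V) X)
    _ = ρ V := by rw [hX, rank_rankClosure hmono hsub (hext V)]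

end CompleteLattice

theorem Submodule.le_rankClosure_finrank_eq_one {F E : Type*} [DivisionRing F] [AddCommGroup E]
    [Module F E] (ρ : Submodule F E → β) (V : Submodule F E) :
    V ≤ rankClosure (fun X : Submodule F E => finrank F X = 1) ρ V := by
  intro v hv
  rcases eq_or_ne v 0 with rfl | hv0
  · exact zero_mem _
  have hline : span F {v} ≤ rankClosure (fun X : Submodule F E => finrank F X = 1) ρ V :=
    le_sSup ⟨finrank_span_singleton hv0, by
      rw [sup_eq_left.mpr ((span_singleton_le_iff_mem v V).mpr hv)]⟩
  exact hline (mem_span_singleton_self v)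

end RankClosure

theorem closure_operator_properties_general
    {F E : Type} [Field F] [AddCommGroup E] [Module F E]
    [FiniteDimensional F E]
    (ρ : Submodule F E → ℚ)
    (hR2 : ∀ V W : Submodule F E, V ≤ W → ρ V ≤ ρ W)
    (hR3 : ∀ V W : Submodule F E, ρ (V ⊔ W) + ρ (V ⊓ W) ≤ ρ V + ρ W)
    (cl : Submodule F E → Submodule F E)
    (hcl : ∀ V : Submodule F E,
      cl V = sSup {X : Submodule F E | finrank F X = 1 ∧ ρ (V ⊔ X) = ρ V}) :
    (∀ V : Submodule F E, V ≤ cl V) ∧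
    (∀ V W : Submodule F E, V ≤ W → cl V ≤ cl W) ∧
    (∀ V : Submodule F E, cl (cl V) = cl V) := by
  have hmono : Monotone ρ := fun V W => hR2 V W
  obtain rfl : cl = rankClosure (fun X : Submodule F E => finrank F X = 1) ρ := funext hcl
  have hext := Submodule.le_rankClosure_finrank_eq_one (F := F) ρ
  exact ⟨hext, fun _ _ hVW => rankClosure_mono hmono hR3 _ hVW,
    rankClosure_idem hmono hR3 hext⟩

/-- For a `q`-polymatroid `(E, ρ)` with closure operator
`cl(V) = Σ{X : dim X = 1, ρ(V + X) = ρ(V)}`, one has (CL1) `V ≤ cl(V)`, (CL2)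
`V ≤ W → cl(V) ≤ cl(W)`, and (CL3) `cl(cl(V)) = cl(V)`. -/
theorem closure_operator_properties
    {F E : Type} [Field F] [Fintype F] [AddCommGroup E] [Module F E]
    [FiniteDimensional F E]
    (ρ : Submodule F E → ℚ)
    (hnonneg : ∀ V : Submodule F E, 0 ≤ ρ V)
    (hR1 : ∀ V : Submodule F E, ρ V ≤ finrank F V)
    (hR2 : ∀ V W : Submodule F E, V ≤ W → ρ V ≤ ρ W)
    (hR3 : ∀ V W : Submodule F E, ρ (V ⊔ W) + ρ (V ⊓ W) ≤ ρ V + ρ W)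
    (cl : Submodule F E → Submodule F E)
    (hcl : ∀ V : Submodule F E,
      cl V = sSup {X : Submodule F E | finrank F X = 1 ∧ ρ (V ⊔ X) = ρ V}) :
    (∀ V : Submodule F E, V ≤ cl V) ∧
    (∀ V W : Submodule F E, V ≤ W → cl V ≤ cl W) ∧
    (∀ V : Submodule F E, cl (cl V) = cl V) :=
  closure_operator_properties_general ρ hR2 hR3 cl hcl
end

section
/- Let C ≤ 𝔽_q^{m×m} be a nonzero rank-metric code with column rank function ρ_c and row rank function ρ_r. Then max{dim V : V ≤ 𝔽_q^m, ρ_c(V) ≤ (dim C − 1)/m} = max{dim W : W ≤ 𝔽_q^m, ρ_r(W) ≤ (dim C − 1)/m}, and the rank distance of C satisfies d_rk(C) = m − max{dim V : V ≤ 𝔽_q^m, ρ_c(V) ≤ (dim C − 1)/m}. -/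
open Module

/-- The submodule of `n × m` matrices whose row space is contained in `W`. -/
def rowspLE {F : Type} [Field F] {n m : ℕ} (W : Submodule F (Fin m → F)) :
    Submodule F (Matrix (Fin n) (Fin m) F) where
  carrier := {M | ∀ x : Fin n → F, M.transpose.mulVec x ∈ W}
  add_mem' := by
    intro M N hM hN x
    rw [Set.mem_setOf_eq] at *
    rw [Matrix.transpose_add, Matrix.add_mulVec]
    exact W.add_mem (hM x) (hN x)
  zero_mem' := by
    intro x
    simp only [Set.mem_setOf_eq, Matrix.transpose_zero, Matrix.zero_mulVec]
    exact W.zero_mem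
  smul_mem' := by
    intro c M hM x
    rw [Set.mem_setOf_eq] at *
    rw [Matrix.transpose_smul, Matrix.smul_mulVec]
    exact W.smul_mem c (hM x)

/-- The shortening `C(W, r) = {M ∈ C : rowsp(M) ⊆ W}`. -/
def codeR {F : Type} [Field F] {n m : ℕ} (C : Submodule F (Matrix (Fin n) (Fin m) F))
    (W : Submodule F (Fin m → F)) : Submodule F (Matrix (Fin n) (Fin m) F) :=
  C ⊓ rowspLE W

/-- The row rank function `ρ_r(W) = (dim C − dim C(W^⊥, r))/n` of a rank-metric code
in `𝔽^{n×m}` (here `n = m`). -/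
noncomputable def rhoR {F : Type} [Field F] {n m : ℕ}
    (C : Submodule F (Matrix (Fin n) (Fin m) F)) (W : Submodule F (Fin m → F)) : ℚ :=
  ((Module.finrank F C : ℚ) - (Module.finrank F (codeR C (dotPerp W)) : ℚ)) / n

/-!
`ρ_c(V) ≤ (dim C − 1)/m` says exactly that `C(V^⊥, c) ≠ 0`, i.e. that some nonzero `M ∈ C`
has column space inside `V^⊥`; this forces `dim V ≤ m − rk M ≤ m − d_rk(C)`, and
`V = colsp(M)^⊥` for `M` of minimal rank attains the bound. Transposition exchanges row and
column spaces and preserves rank, so the row statement is the column statement for `Cᵀ`.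
-/

section DotPerp

variable {F : Type} [Field F] {n : ℕ}

lemma dotPerp_eq_comap_dualAnnihilator (V : Submodule F (Fin n → F)) :
    dotPerp V = V.dualAnnihilator.comap (dotProductEquiv F (Fin n)).toLinearMap := by
  ext w
  simp only [Submodule.mem_comap, Submodule.mem_dualAnnihilator, LinearEquiv.coe_coe,
    dotProductEquiv_apply_apply, dotProduct_comm w]
  rfl

lemma finrank_add_finrank_dotPerp (V : Submodule F (Fin n → F)) :
    finrank F V + finrank F (dotPerp V) = n := by
  rw [dotPerp_eq_comap_dualAnnihilator, Submodule.comap_equiv_eq_map_symm,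
    LinearEquiv.finrank_map_eq, Subspace.finrank_add_finrank_dualAnnihilator_eq,
    finrank_fin_fun]

lemma le_dotPerp_dotPerp (V : Submodule F (Fin n → F)) : V ≤ dotPerp (dotPerp V) :=
  fun v hv _ hw => dotProduct_comm v _ ▸ hw v hv

end DotPerp

section RankMetricCode

open scoped Matrix

variable {F : Type} [Field F] {n m : ℕ}

lemma mem_colspLE_iff_range_le {M : Matrix (Fin n) (Fin m) F} {V : Submodule F (Fin n → F)} :
    M ∈ colspLE V ↔ LinearMap.range M.mulVecLin ≤ V :=
  ⟨fun h => by rintro _ ⟨x, rfl⟩; exact h x, fun h x => h ⟨x, rfl⟩⟩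

lemma rank_le_finrank_of_mem_colspLE {M : Matrix (Fin n) (Fin m) F}
    {V : Submodule F (Fin n → F)} (hM : M ∈ colspLE V) : M.rank ≤ finrank F V :=
  Submodule.finrank_mono (mem_colspLE_iff_range_le.mp hM)

lemma rhoC_le_iff_codeC_ne_bot (hm : 0 < m) (C : Submodule F (Matrix (Fin n) (Fin m) F))
    (V : Submodule F (Fin n → F)) :
    rhoC C V ≤ ((finrank F C : ℚ) - 1) / m ↔ codeC C (dotPerp V) ≠ ⊥ := by
  rw [rhoC, div_le_div_iff_of_pos_right (by exact_mod_cast hm), sub_le_sub_iff_left,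
    Nat.one_le_cast, Nat.one_le_iff_ne_zero, Ne, Submodule.finrank_eq_zero]

def transposeCode (C : Submodule F (Matrix (Fin n) (Fin m) F)) :
    Submodule F (Matrix (Fin m) (Fin n) F) :=
  C.comap (Matrix.transposeLinearEquiv (Fin m) (Fin n) F F).toLinearMap

lemma finrank_comap_transpose (C : Submodule F (Matrix (Fin n) (Fin m) F)) :
    finrank F (C.comap (Matrix.transposeLinearEquiv (Fin m) (Fin n) F F).toLinearMap) =
      finrank F C := by
  rw [Submodule.comap_equiv_eq_map_symm, LinearEquiv.finrank_map_eq]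

lemma finrank_transposeCode (C : Submodule F (Matrix (Fin n) (Fin m) F)) :
    finrank F (transposeCode C) = finrank F C :=
  finrank_comap_transpose C

lemma codeC_transposeCode (C : Submodule F (Matrix (Fin n) (Fin m) F))
    (W : Submodule F (Fin m → F)) :
    codeC (transposeCode C) W =
      (codeR C W).comap (Matrix.transposeLinearEquiv (Fin m) (Fin n) F F).toLinearMap :=
  (Submodule.comap_inf C (rowspLE W) _).symm

lemma rhoR_eq_rhoC_transposeCode (C : Submodule F (Matrix (Fin n) (Fin m) F))
    (W : Submodule F (Fin m → F)) : rhoR C W = rhoC (transposeCode C) W := by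
  rw [rhoR, rhoC, codeC_transposeCode, finrank_comap_transpose, finrank_transposeCode]

lemma transposeCode_ne_bot {C : Submodule F (Matrix (Fin n) (Fin m) F)} (hC : C ≠ ⊥) :
    transposeCode C ≠ ⊥ := by
  obtain ⟨M, hM, hM0⟩ := (Submodule.ne_bot_iff C).mp hC
  exact (Submodule.ne_bot_iff _).mpr ⟨Mᵀ, hM, Matrix.transpose_eq_zero.not.mpr hM0⟩

/-- Junk value `0` when `C = ⊥`. -/
noncomputable def rankDistance (C : Submodule F (Matrix (Fin n) (Fin m) F)) : ℕ :=
  sInf {r : ℕ | ∃ M ∈ C, M ≠ 0 ∧ M.rank = r}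

lemma rankDistance_le_rank {C : Submodule F (Matrix (Fin n) (Fin m) F)}
    {M : Matrix (Fin n) (Fin m) F} (hM : M ∈ C) (hM0 : M ≠ 0) : rankDistance C ≤ M.rank :=
  Nat.sInf_le ⟨M, hM, hM0, rfl⟩

lemma exists_rank_eq_rankDistance {C : Submodule F (Matrix (Fin n) (Fin m) F)} (hC : C ≠ ⊥) :
    ∃ M ∈ C, M ≠ 0 ∧ M.rank = rankDistance C := by
  obtain ⟨M, hM, hM0⟩ := (Submodule.ne_bot_iff C).mp hC
  exact Nat.sInf_mem (s := {r | ∃ M ∈ C, M ≠ 0 ∧ M.rank = r}) ⟨M.rank, M, hM, hM0, rfl⟩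

lemma rankDistance_le_height {C : Submodule F (Matrix (Fin n) (Fin m) F)} (hC : C ≠ ⊥) :
    rankDistance C ≤ n := by
  obtain ⟨M, -, -, hM⟩ := exists_rank_eq_rankDistance hC
  exact hM ▸ M.rank_le_height

lemma rankDistance_transposeCode (C : Submodule F (Matrix (Fin n) (Fin m) F)) :
    rankDistance (transposeCode C) = rankDistance C := by
  refine congrArg sInf (Set.ext fun r => ⟨?_, ?_⟩)
  · rintro ⟨M, hM, hM0, rfl⟩
    exact ⟨Mᵀ, hM, Matrix.transpose_eq_zero.not.mpr hM0, M.rank_transpose⟩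
  · rintro ⟨M, hM, hM0, rfl⟩
    exact ⟨Mᵀ, by simpa [transposeCode] using hM, Matrix.transpose_eq_zero.not.mpr hM0,
      M.rank_transpose⟩

theorem sSup_finrank_rhoC_le_eq_sub_rankDistance {C : Submodule F (Matrix (Fin n) (Fin m) F)}
    (hC : C ≠ ⊥) :
    sSup {v : ℕ | ∃ V : Submodule F (Fin n → F), finrank F V = v ∧
        rhoC C V ≤ ((finrank F C : ℚ) - 1) / m} = n - rankDistance C := by
  obtain ⟨M₀, hM₀C, hM₀0, hM₀rank⟩ := exists_rank_eq_rankDistance hC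
  have hm : 0 < m :=
    Nat.pos_of_ne_zero fun h => hM₀0 (by subst h; exact Matrix.ext fun _ j => j.elim0)
  simp_rw [rhoC_le_iff_codeC_ne_bot hm]
  refine IsGreatest.csSup_eq ⟨⟨dotPerp (LinearMap.range M₀.mulVecLin), ?_, ?_⟩, ?_⟩
  · have hdim := finrank_add_finrank_dotPerp (LinearMap.range M₀.mulVecLin)
    rw [Matrix.rank] at hM₀rank
    omega
  · exact (Submodule.ne_bot_iff _).mpr
      ⟨M₀, ⟨hM₀C, mem_colspLE_iff_range_le.mpr (le_dotPerp_dotPerp _)⟩, hM₀0⟩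
  · rintro _ ⟨V, rfl, hV⟩
    obtain ⟨M, ⟨hMC, hMV⟩, hM0⟩ := (Submodule.ne_bot_iff _).mp hV
    have hdM := rankDistance_le_rank hMC hM0
    have hMV := rank_le_finrank_of_mem_colspLE hMV
    have hdim := finrank_add_finrank_dotPerp V
    omega

end RankMetricCode

theorem rank_distance_via_rhoC_rhoR_general
    {F : Type} [Field F] {m : ℕ}
    (C : Submodule F (Matrix (Fin m) (Fin m) F)) (hC : C ≠ ⊥) :
    sSup {v : ℕ | ∃ V : Submodule F (Fin m → F), finrank F V = v ∧
        rhoC C V ≤ ((finrank F C : ℚ) - 1) / m}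
      = sSup {w : ℕ | ∃ W : Submodule F (Fin m → F), finrank F W = w ∧
          rhoR C W ≤ ((finrank F C : ℚ) - 1) / m} ∧
    sInf {r : ℕ | ∃ M ∈ C, M ≠ 0 ∧ M.rank = r}
      = m - sSup {v : ℕ | ∃ V : Submodule F (Fin m → F), finrank F V = v ∧
          rhoC C V ≤ ((finrank F C : ℚ) - 1) / m} := by
  have hcol := sSup_finrank_rhoC_le_eq_sub_rankDistance hC
  have hrow := sSup_finrank_rhoC_le_eq_sub_rankDistance (transposeCode_ne_bot hC)
  rw [finrank_transposeCode, rankDistance_transposeCode] at hrow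
  simp_rw [rhoR_eq_rhoC_transposeCode]
  refine ⟨hcol.trans hrow.symm, ?_⟩
  have hdm := rankDistance_le_height hC
  rw [hcol]
  change rankDistance C = m - (m - rankDistance C)
  omega

/-- For a nonzero code `C ≤ 𝔽_q^{m×m}`, the largest dimension of a
subspace `V` with `ρ_c(V) ≤ (dim C − 1)/m` equals the largest dimension of a subspace
`W` with `ρ_r(W) ≤ (dim C − 1)/m`, and the rank distance of `C` is `m` minus this
quantity. -/
theorem rank_distance_via_rhoC_rhoR
    {F : Type} [Field F] [Fintype F] {m : ℕ}
    (C : Submodule F (Matrix (Fin m) (Fin m) F)) (hC : C ≠ ⊥) :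
    sSup {v : ℕ | ∃ V : Submodule F (Fin m → F), finrank F V = v ∧
        rhoC C V ≤ ((finrank F C : ℚ) - 1) / m}
      = sSup {w : ℕ | ∃ W : Submodule F (Fin m → F), finrank F W = w ∧
          rhoR C W ≤ ((finrank F C : ℚ) - 1) / m} ∧
    sInf {r : ℕ | ∃ M ∈ C, M ≠ 0 ∧ M.rank = r}
      = m - sSup {v : ℕ | ∃ V : Submodule F (Fin m → F), finrank F V = v ∧
          rhoC C V ≤ ((finrank F C : ℚ) - 1) / m} :=
  rank_distance_via_rhoC_rhoR_general C hC
end
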